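/- arXiv:0710.5845 — 6 statements merged into one kernel-verified Lean document; each statement's English description precedes it below -/
import Mathlib

section
/- Under the map R above, one has R(I_A) = T(I_A), R(I_C) = T(I_C), R(I_B) = I_D, and R(I_D) = T(I_B), where I_D = [α+β+γ, α+2β+γ); consequently the first return time of R to I equals 1 on I_A ∪ I_C and 2 on I_B. -/
/-- The exchange of three intervals with permutation (321). -/
noncomputable def threeIET (α β γ : ℝ) (x : ℝ) : ℝ :=
  if x < α then x + β + γ
  else if x < α + β then x + γ - α
  else x - α - β

/-- The rotation on `J = [0, α+2β+γ)` exchanging `[0,α+β)` and `[α+β,α+2β+γ)`. -/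
noncomputable def rotJ (α β γ : ℝ) (x : ℝ) : ℝ :=
  if x < α + β then x + β + γ else x - α - β

/-- R(I_A) = T(I_A), R(I_C) = T(I_C), R(I_B) = I_D, R(I_D) = T(I_B),
and the first return time of R to I is 1 on I_A ∪ I_C and 2 on I_B. -/
theorem stmt_2 (α β γ : ℝ) (hα : 0 < α) (hβ : 0 < β) (hγ : 0 < γ) :
    let IA := Set.Ico (0:ℝ) α
    let IB := Set.Ico α (α + β)
    let IC := Set.Ico (α + β) (α + β + γ)
    let ID := Set.Ico (α + β + γ) (α + 2*β + γ)
    let I := Set.Ico (0:ℝ) (α + β + γ)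
    (rotJ α β γ '' IA = threeIET α β γ '' IA) ∧
    (rotJ α β γ '' IC = threeIET α β γ '' IC) ∧
    (rotJ α β γ '' IB = ID) ∧
    (rotJ α β γ '' ID = threeIET α β γ '' IB) ∧
    (∀ x ∈ IA ∪ IC, rotJ α β γ x ∈ I) ∧
    (∀ x ∈ IB, rotJ α β γ x ∉ I ∧ (rotJ α β γ)^[2] x ∈ I) := by
  intro IA IB IC ID I
  have hAB : rotJ α β γ '' IB = (fun x => x + (β + γ)) '' IB :=
    Set.image_congr fun x hx => by
      simp only [rotJ, if_pos (show x < α + β from hx.2)]; ring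
  have hAD : rotJ α β γ '' ID = (fun x => x + (-α - β)) '' ID :=
    Set.image_congr fun x hx => by
      have h : ¬ x < α + β := by have := hx.1; push_neg; linarith
      simp only [rotJ, if_neg h]; ring
  have hTB : threeIET α β γ '' IB = (fun x => x + (γ - α)) '' IB :=
    Set.image_congr fun x hx => by
      have h1 : ¬ x < α := by have := hx.1; push_neg; linarith
      simp only [threeIET, if_neg h1, if_pos hx.2]; ring
  refine ⟨?_, ?_, ?_, ?_, ?_, ?_⟩
  · exact Set.image_congr fun x hx => by
      have h1 : x < α := hx.2
      have h2 : x < α + β := by linarith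
      simp only [rotJ, threeIET, if_pos h1, if_pos h2]
  · exact Set.image_congr fun x hx => by
      have h1 : ¬ x < α + β := by have := hx.1; push_neg; linarith
      have h2 : ¬ x < α := by have := hx.1; push_neg; linarith
      simp only [rotJ, threeIET, if_neg h1, if_neg h2]
  · rw [hAB, Set.image_add_const_Ico]
    show Set.Ico _ _ = Set.Ico (α + β + γ) (α + 2*β + γ)
    congr 1 <;> ring
  · rw [hAD, hTB, Set.image_add_const_Ico, Set.image_add_const_Ico]
    congr 1 <;> ring
  · rintro x (hx | hx)
    · have h2 : x < α + β := by have := hx.2; linarith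
      simp only [rotJ, if_pos h2, Set.mem_Ico]
      have := hx.1; have := hx.2
      constructor <;> linarith
    · have h1 : ¬ x < α + β := by have := hx.1; push_neg; linarith
      simp only [rotJ, if_neg h1, Set.mem_Ico]
      have := hx.1; have := hx.2
      constructor <;> linarith
  · intro x hx
    have hx1 := hx.1; have hx2 := hx.2
    have h1 : x < α + β := hx2
    have e1 : rotJ α β γ x = x + β + γ := by unfold rotJ; rw [if_pos h1]
    constructor
    · rw [e1]; intro h; have := h.2; linarith
    · have h2 : ¬ x + β + γ < α + β := by push_neg; linarith
      simp only [Function.iterate_succ, Function.iterate_zero, Function.comp_apply, id]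
      rw [e1]
      simp only [rotJ, if_neg h2, Set.mem_Ico]
      constructor <;> linarith
end

section
/- Let v be a sturmian word of slope ε and (n_k) a strictly increasing sequence of indices with v_{n_k−1} = 0 and v_{n_k} = 1. Define v' by swapping these pairs: v'_{n_k−1} = 1, v'_{n_k} = 0, and v'_i = v_i otherwise. Then v' is sturmian if and only if for every index i not in the sequence (n_k) and every j, f(V_{n_j}) > f(V_i). -/
/-- Number of `0`s (coded by `false`) among `u i, u (i+1), …, u (i+n-1)`. -/
def zeroCountFrom (u : ℕ → Bool) (i n : ℕ) : ℕ :=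
  ((Finset.range n).filter fun k => u (i + k) = false).card

/-- A binary word is balanced if any two factors of the same length have numbers
of `0`s differing by at most 1. -/
def IsBalanced (u : ℕ → Bool) : Prop :=
  ∀ i j n : ℕ, |(zeroCountFrom u i n : ℤ) - (zeroCountFrom u j n : ℤ)| ≤ 1

/-- An infinite word is aperiodic if it is not eventually periodic. -/
def IsAperiodic {A : Type*} (u : ℕ → A) : Prop :=
  ¬ ∃ p : ℕ, 0 < p ∧ ∃ N : ℕ, ∀ n ≥ N, u (n + p) = u n

/-- A sturmian word is an aperiodic balanced binary word. -/
def IsSturmian (u : ℕ → Bool) : Prop := IsBalanced u ∧ IsAperiodic u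

open Filter

lemma zc_succ (u : ℕ → Bool) (i m : ℕ) :
    zeroCountFrom u i (m+1) = zeroCountFrom u i m + (if u (i+m) = false then 1 else 0) := by
  by_cases h : u (i+m) = false <;>
    simp [zeroCountFrom, Finset.range_add_one, Finset.filter_insert, h]

lemma zc_add (u : ℕ → Bool) (i a b : ℕ) :
    zeroCountFrom u i (a+b) = zeroCountFrom u i a + zeroCountFrom u (i+a) b := by
  induction b with
  | zero => simp [zeroCountFrom]
  | succ b ih =>
      have : a + (b+1) = (a+b)+1 := rfl
      rw [this, zc_succ, ih, zc_succ, Nat.add_assoc, Nat.add_assoc]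

lemma zc_le (u : ℕ → Bool) (i nn : ℕ) : zeroCountFrom u i nn ≤ nn := by
  simpa [zeroCountFrom] using Finset.card_filter_le (Finset.range nn) _

lemma irr_ne_nat_mul {ε : ℝ} (hirr : Irrational ε) (q N : ℕ) (hN : 0 < N) :
    (q : ℝ) ≠ N * ε := by
  intro h
  apply hirr
  refine ⟨(q : ℚ) / N, ?_⟩
  have hN' : (N : ℝ) ≠ 0 := by positivity
  push_cast
  field_simp
  linarith [h]

lemma bal_close {ε : ℝ} (hε0 : 0 < ε) (hirr : Irrational ε) (u : ℕ → Bool)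
    (hbal : IsBalanced u)
    (hdens : Tendsto (fun m => (zeroCountFrom u 0 m : ℝ) / m) atTop (nhds ε)) :
    ∀ i N : ℕ, |(zeroCountFrom u i N : ℝ) - N * ε| < 1 := by
  intro i N
  rcases Nat.eq_zero_or_pos N with hN | hN
  · simp [hN, zeroCountFrom]
  have hNR : (0:ℝ) < N := by exact_mod_cast hN
  have hsub : Tendsto (fun k => (zeroCountFrom u 0 (k * N) : ℝ) / ((k * N : ℕ) : ℝ)) atTop (nhds ε) := by
    have h1 : Tendsto (fun k : ℕ => k * N) atTop atTop :=
      tendsto_atTop_mono (fun k => Nat.le_mul_of_pos_right k hN) tendsto_id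
    exact hdens.comp h1
  have hirrN : ∀ q : ℕ, (q : ℝ) ≠ N * ε := fun q => irr_ne_nat_mul hirr q N hN
  rw [abs_lt]
  constructor
  · -- lower bound: N*ε - 1 < d i
    by_contra hcon
    push_neg at hcon
    have hup : ∀ j, (zeroCountFrom u j N : ℝ) < N * ε := by
      intro j
      have hb := hbal j i N
      have h1 : (zeroCountFrom u j N : ℝ) - zeroCountFrom u i N ≤ 1 := by
        exact_mod_cast (abs_le.1 hb).2
      have h2 : (zeroCountFrom u j N : ℝ) ≤ N * ε := by linarith
      exact lt_of_le_of_ne h2 (hirrN _)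
    set c := ⌊(N:ℝ) * ε⌋₊ with hc
    have hle : ∀ j, zeroCountFrom u j N ≤ c := fun j => Nat.le_floor (le_of_lt (hup j))
    have hcR : (c : ℝ) < N * ε := lt_of_le_of_ne (Nat.floor_le (by positivity)) (hirrN c)
    have hZ : ∀ k : ℕ, zeroCountFrom u 0 (k * N) ≤ k * c := by
      intro k
      induction k with
      | zero => simp [zeroCountFrom]
      | succ k ih =>
          have : (k+1) * N = k * N + N := by ring
          rw [this, zc_add]
          have := hle (0 + k * N)
          calc zeroCountFrom u 0 (k*N) + zeroCountFrom u (0 + k*N) N ≤ k*c + c := by omega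
            _ = (k+1) * c := by ring
    have hev : ∀ᶠ k : ℕ in atTop, (zeroCountFrom u 0 (k * N) : ℝ) / ((k*N:ℕ):ℝ) ≤ (c:ℝ)/N := by
      filter_upwards [eventually_ge_atTop 1] with k hk
      have hkR : (0:ℝ) < k := by exact_mod_cast hk
      have h1 : (zeroCountFrom u 0 (k*N) : ℝ) ≤ k * c := by exact_mod_cast hZ k
      rw [Nat.cast_mul, div_le_div_iff₀ (by positivity) hNR]
      have h2 : (zeroCountFrom u 0 (k*N) : ℝ) * N ≤ (k*c) * N := by nlinarith
      calc (zeroCountFrom u 0 (k*N) : ℝ) * N ≤ (k*c)*N := h2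
        _ = c * (k*N) := by ring
    have hfin : ε ≤ (c:ℝ)/N := le_of_tendsto hsub hev
    have : (c:ℝ)/N < ε := by rw [div_lt_iff₀ hNR]; linarith
    linarith
  · -- upper bound: d i < N*ε + 1
    by_contra hcon
    push_neg at hcon
    have hup : ∀ j, (N:ℝ) * ε < zeroCountFrom u j N := by
      intro j
      have hb := hbal i j N
      have h1 : (zeroCountFrom u i N : ℝ) - zeroCountFrom u j N ≤ 1 := by
        exact_mod_cast (abs_le.1 hb).2
      have h2 : (N:ℝ) * ε ≤ zeroCountFrom u j N := by linarith
      exact lt_of_le_of_ne h2 (fun h => hirrN _ h.symm)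
    set c := ⌊(N:ℝ) * ε⌋₊ + 1 with hc
    have hle : ∀ j, c ≤ zeroCountFrom u j N := by
      intro j
      have : ⌊(N:ℝ)*ε⌋₊ < zeroCountFrom u j N := (Nat.floor_lt (by positivity)).2 (hup j)
      omega
    have hcR : (N:ℝ) * ε < c := by
      have := Nat.lt_floor_add_one ((N:ℝ)*ε)
      push_cast [hc]
      push_cast at this
      linarith
    have hZ : ∀ k : ℕ, k * c ≤ zeroCountFrom u 0 (k * N) := by
      intro k
      induction k with
      | zero => simp
      | succ k ih =>
          have : (k+1) * N = k * N + N := by ring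
          rw [this, zc_add]
          have := hle (0 + k * N)
          calc (k+1) * c = k*c + c := by ring
            _ ≤ zeroCountFrom u 0 (k*N) + zeroCountFrom u (0 + k*N) N := by omega
    have hev : ∀ᶠ k : ℕ in atTop, (c:ℝ)/N ≤ (zeroCountFrom u 0 (k * N) : ℝ) / ((k*N:ℕ):ℝ) := by
      filter_upwards [eventually_ge_atTop 1] with k hk
      have hkR : (0:ℝ) < k := by exact_mod_cast hk
      have h1 : ((k:ℝ) * c) ≤ zeroCountFrom u 0 (k*N) := by exact_mod_cast hZ k
      rw [Nat.cast_mul, div_le_div_iff₀ hNR (by positivity)]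
      calc (c:ℝ) * (k*N) = (k*c)*N := by ring
        _ ≤ (zeroCountFrom u 0 (k*N) : ℝ) * N := by nlinarith
    have hfin : (c:ℝ)/N ≤ ε := ge_of_tendsto hsub hev
    have : ε < (c:ℝ)/N := by rw [lt_div_iff₀ hNR]; linarith
    linarith

lemma pair_close {ε : ℝ} (hε0 : 0 < ε) (hirr : Irrational ε) (u : ℕ → Bool)
    (hbal : IsBalanced u)
    (hdens : Tendsto (fun m => (zeroCountFrom u 0 m : ℝ) / m) atTop (nhds ε)) :
    ∀ a b : ℕ, |((zeroCountFrom u 0 a : ℝ) - a * ε) - ((zeroCountFrom u 0 b : ℝ) - b * ε)| < 1 := by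
  have key : ∀ a b : ℕ, b ≤ a →
      |((zeroCountFrom u 0 a : ℝ) - a * ε) - ((zeroCountFrom u 0 b : ℝ) - b * ε)| < 1 := by
    intro a b hba
    have hsplit : zeroCountFrom u 0 a = zeroCountFrom u 0 b + zeroCountFrom u (0 + b) (a - b) := by
      rw [← zc_add]
      congr 1
      omega
    have haR : (a : ℝ) = b + ((a - b : ℕ) : ℝ) := by
      push_cast [Nat.cast_sub hba]
      ring
    have heq : ((zeroCountFrom u 0 a : ℝ) - a * ε) - ((zeroCountFrom u 0 b : ℝ) - b * ε)
        = (zeroCountFrom u (0 + b) (a - b) : ℝ) - ((a - b : ℕ) : ℝ) * ε := by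
      rw [hsplit, haR]
      push_cast
      ring
    rw [heq]
    exact bal_close hε0 hirr u hbal hdens (0 + b) (a - b)
  intro a b
  rcases le_total b a with h | h
  · exact key a b h
  · rw [abs_sub_comm]
    exact key b a h

lemma aperiodic_of_irr {ε : ℝ} (hirr : Irrational ε) (u : ℕ → Bool)
    (hdens : Tendsto (fun m => (zeroCountFrom u 0 m : ℝ) / m) atTop (nhds ε)) :
    IsAperiodic u := by
  rintro ⟨p, hp, N, hper⟩
  -- shift invariance
  have hshift : ∀ k t : ℕ, u (N + k * p + t) = u (N + t) := by
    intro k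
    induction k with
    | zero => simp
    | succ k ih =>
        intro t
        have h1 : N + (k+1) * p + t = (N + k * p + t) + p := by ring
        rw [h1, hper _ (by omega)]
        exact ih t
  set c := zeroCountFrom u N p with hc
  have hcount : ∀ k : ℕ, zeroCountFrom u 0 (N + k * p) = zeroCountFrom u 0 N + k * c := by
    intro k
    induction k with
    | zero => simp
    | succ k ih =>
        have h1 : N + (k+1) * p = (N + k * p) + p := by ring
        rw [h1, zc_add, ih]
        have h2 : zeroCountFrom u (0 + (N + k * p)) p = c := by
          unfold zeroCountFrom
          congr 1
          apply Finset.filter_congr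
          intro t _
          rw [show 0 + (N + k * p) + t = N + k * p + t by ring, hshift k t]
        rw [h2]
        ring
  -- limit of the subsequence is c / p
  have hpR : (0:ℝ) < p := by exact_mod_cast hp
  have hlim : Tendsto (fun k : ℕ => ((zeroCountFrom u 0 N : ℝ) + k * c) / (N + k * p))
      atTop (nhds ((c:ℝ)/p)) := by
    have h1 : Tendsto (fun k : ℕ => ((zeroCountFrom u 0 N : ℝ)/k + c) / ((N:ℝ)/k + p))
        atTop (nhds ((c:ℝ)/p)) := by
      have hnum : Tendsto (fun k : ℕ => (zeroCountFrom u 0 N : ℝ)/k + c) atTop (nhds (0 + c)) :=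
        (tendsto_const_div_atTop_nhds_zero_nat _).add tendsto_const_nhds
      have hden : Tendsto (fun k : ℕ => (N:ℝ)/k + p) atTop (nhds (0 + p)) :=
        (tendsto_const_div_atTop_nhds_zero_nat _).add tendsto_const_nhds
      have := hnum.div hden (by rw [zero_add]; positivity)
      simp only [zero_add] at this; exact this
    refine h1.congr' ?_
    filter_upwards [eventually_ge_atTop 1] with k hk
    have hkR : (0:ℝ) < k := by exact_mod_cast hk
    field_simp
  have hsub : Tendsto (fun k : ℕ => (zeroCountFrom u 0 (N + k * p) : ℝ) / ((N + k * p : ℕ) : ℝ))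
      atTop (nhds ε) := by
    have h1 : Tendsto (fun k : ℕ => N + k * p) atTop atTop :=
      tendsto_atTop_mono (fun k => le_trans (Nat.le_mul_of_pos_right k hp) (Nat.le_add_left _ _)) tendsto_id
    exact hdens.comp h1
  have heqf : (fun k : ℕ => (zeroCountFrom u 0 (N + k * p) : ℝ) / ((N + k * p : ℕ) : ℝ))
      = fun k : ℕ => ((zeroCountFrom u 0 N : ℝ) + k * c) / (N + k * p) := by
    funext k
    rw [hcount k]
    push_cast
    ring_nf
  rw [heqf] at hsub
  have hε : ε = (c:ℝ)/p := tendsto_nhds_unique hsub hlim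
  apply hirr
  exact ⟨(c:ℚ)/p, by push_cast [hε]; ring⟩



/-- swapping lemma. Let v be sturmian with density of 0 equal to ε,
(n_k) strictly increasing with v_{n_k−1} = 0, v_{n_k} = 1, and v' obtained by
swapping these pairs. Then v' is sturmian iff f(V_{n_j}) > f(V_i) for all i not
in the sequence (n_k) and all j, where f(V_m) = |V_m|_0 − mε. -/
theorem stmt_4 (ε : ℝ) (hε : ε ∈ Set.Ioo (0:ℝ) 1) (hirr : Irrational ε)
    (v : ℕ → Bool) (hstur : IsSturmian v)
    (hdens : Filter.Tendsto (fun m => (zeroCountFrom v 0 m : ℝ) / m)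
      Filter.atTop (nhds ε))
    (n : ℕ → ℕ) (hmono : StrictMono n) (hpos : ∀ k, 0 < n k)
    (hv0 : ∀ k, v (n k - 1) = false) (hv1 : ∀ k, v (n k) = true)
    (v' : ℕ → Bool)
    (hv' : ∀ k, v' (n k - 1) = true ∧ v' (n k) = false)
    (hv'' : ∀ i, (∀ k, i ≠ n k - 1 ∧ i ≠ n k) → v' i = v i) :
    IsSturmian v' ↔
      ∀ i : ℕ, (∀ k, i ≠ n k) → ∀ j : ℕ,
        (zeroCountFrom v 0 (n j) : ℝ) - (n j) * ε >
          (zeroCountFrom v 0 i : ℝ) - i * ε := by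
  classical
  obtain ⟨hε0, hε1⟩ := hε
  set χ : ℕ → ℤ := fun m => if ∃ k, n k = m then 1 else 0 with hχdef
  have hχ01 : ∀ m, χ m = 0 ∨ χ m = 1 := by
    intro m
    by_cases h : ∃ k, n k = m
    · right; simp [hχdef, h]
    · left; simp [hχdef, h]
  -- the step claim
  have hstep : ∀ m, (if v' m = false then (1:ℤ) else 0)
      = (if v m = false then (1:ℤ) else 0) + χ m - χ (m+1) := by
    intro m
    by_cases hm : ∃ k, n k = m
    · obtain ⟨k, hk⟩ := hm
      have hvm : v m = true := by rw [← hk]; exact hv1 k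
      have hv'm : v' m = false := by rw [← hk]; exact (hv' k).2
      have hχm : χ m = 1 := by simp [hχdef]; exact ⟨k, hk⟩
      have hχm1 : χ (m+1) = 0 := by
        simp only [hχdef]
        rw [if_neg]
        rintro ⟨j, hj⟩
        have hj' : n j - 1 = m := by have := hpos j; omega
        have hfalse : v m = false := by rw [← hj']; exact hv0 j
        rw [hvm] at hfalse
        exact Bool.noConfusion hfalse
      simp [hvm, hv'm, hχm, hχm1]
    · by_cases hm1 : ∃ k, n k = m + 1
      · obtain ⟨k, hk⟩ := hm1
        have hj' : n k - 1 = m := by have := hpos k; omega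
        have hvm : v m = false := by rw [← hj']; exact hv0 k
        have hv'm : v' m = true := by rw [← hj']; exact (hv' k).1
        have hχm : χ m = 0 := by simp only [hχdef]; rw [if_neg hm]
        have hχm1 : χ (m+1) = 1 := by simp only [hχdef]; rw [if_pos ⟨k, hk⟩]
        simp [hvm, hv'm, hχm, hχm1]
      · have hveq : v' m = v m := by
          apply hv''
          intro k
          constructor
          · intro h
            exact hm1 ⟨k, by have := hpos k; omega⟩
          · intro h
            exact hm ⟨k, h.symm⟩
        have hχm : χ m = 0 := by simp only [hχdef]; rw [if_neg hm]
        have hχm1 : χ (m+1) = 0 := by simp only [hχdef]; rw [if_neg hm1]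
        simp [hveq, hχm, hχm1]
  -- prefix count relation
  have hZ' : ∀ m, (zeroCountFrom v' 0 m : ℤ) = (zeroCountFrom v 0 m : ℤ) - χ m := by
    intro m
    induction m with
    | zero =>
        have : χ 0 = 0 := by
          simp only [hχdef]
          rw [if_neg]
          rintro ⟨k, hk⟩
          have := hpos k
          omega
        simp [zeroCountFrom, this]
    | succ m ih =>
        have e1 : (zeroCountFrom v' 0 (m+1) : ℤ)
            = (zeroCountFrom v' 0 m : ℤ) + (if v' m = false then (1:ℤ) else 0) := by
          rw [zc_succ]
          push_cast [Nat.zero_add, apply_ite (Nat.cast : ℕ → ℤ)]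
          ring
        have e2 : (zeroCountFrom v 0 (m+1) : ℤ)
            = (zeroCountFrom v 0 m : ℤ) + (if v m = false then (1:ℤ) else 0) := by
          rw [zc_succ]
          push_cast [Nat.zero_add, apply_ite (Nat.cast : ℕ → ℤ)]
          ring
        rw [e1, e2, ih, hstep m]
        ring
  have hF' : ∀ m, (zeroCountFrom v' 0 m : ℝ) = (zeroCountFrom v 0 m : ℝ) - (χ m : ℝ) := by
    intro m
    exact_mod_cast congrArg (fun z : ℤ => (z : ℝ)) (hZ' m)
  -- density of v'
  have hdiv : Filter.Tendsto (fun m : ℕ => (χ m : ℝ)/m) Filter.atTop (nhds 0) := by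
    apply squeeze_zero (g := fun m : ℕ => 1/(m:ℝ))
    · intro m
      rcases hχ01 m with h | h <;> simp [h] <;> positivity
    · intro m
      rcases hχ01 m with h | h <;> simp [h] <;> positivity
    · exact tendsto_one_div_atTop_nhds_zero_nat
  have hdens' : Filter.Tendsto (fun m => (zeroCountFrom v' 0 m : ℝ) / m)
      Filter.atTop (nhds ε) := by
    have he : (fun m : ℕ => (zeroCountFrom v' 0 m : ℝ)/m)
        = fun m : ℕ => (zeroCountFrom v 0 m : ℝ)/m - (χ m : ℝ)/m := by
      funext m
      rw [hF', sub_div]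
    rw [he]
    simpa using hdens.sub hdiv
  have hpairv := pair_close hε0 hirr v hstur.1 hdens
  constructor
  · -- forward
    intro hs' i hi j
    have hpair' := pair_close hε0 hirr v' hs'.1 hdens'
    have h := hpair' (n j) i
    have hχj : χ (n j) = 1 := by simp only [hχdef]; rw [if_pos ⟨j, rfl⟩]
    have hχi : χ i = 0 := by
      simp only [hχdef]
      rw [if_neg]
      rintro ⟨k, hk⟩
      exact hi k hk.symm
    rw [hF', hF', hχj, hχi] at h
    have := (abs_lt.1 h).1
    push_cast at this
    linarith
  · -- backward
    intro hgt
    have hpair' : ∀ a b : ℕ,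
        |((zeroCountFrom v' 0 a : ℝ) - a * ε) - ((zeroCountFrom v' 0 b : ℝ) - b * ε)| < 1 := by
      intro a b
      have hv := hpairv a b
      rw [hF', hF']
      by_cases ha : ∃ k, n k = a <;> by_cases hb : ∃ k, n k = b
      · have h1 : χ a = 1 := by simp only [hχdef]; rw [if_pos ha]
        have h2 : χ b = 1 := by simp only [hχdef]; rw [if_pos hb]
        rw [h1, h2]
        push_cast
        rw [abs_lt] at hv ⊢
        constructor <;> linarith [hv.1, hv.2]
      · obtain ⟨k, hk⟩ := ha
        have h1 : χ a = 1 := by simp only [hχdef]; rw [if_pos ⟨k, hk⟩]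
        have h2 : χ b = 0 := by simp only [hχdef]; rw [if_neg hb]
        have hbne : ∀ k, b ≠ n k := fun k h => hb ⟨k, h.symm⟩
        have hg := hgt b hbne k
        rw [hk] at hg
        rw [h1, h2]
        push_cast
        rw [abs_lt] at hv ⊢
        constructor <;> linarith [hv.1, hv.2]
      · obtain ⟨k, hk⟩ := hb
        have h1 : χ a = 0 := by simp only [hχdef]; rw [if_neg ha]
        have h2 : χ b = 1 := by simp only [hχdef]; rw [if_pos ⟨k, hk⟩]
        have hane : ∀ k, a ≠ n k := fun k h => ha ⟨k, h.symm⟩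
        have hg := hgt a hane k
        rw [hk] at hg
        rw [h1, h2]
        push_cast
        rw [abs_lt] at hv ⊢
        constructor <;> linarith [hv.1, hv.2]
      · have h1 : χ a = 0 := by simp only [hχdef]; rw [if_neg ha]
        have h2 : χ b = 0 := by simp only [hχdef]; rw [if_neg hb]
        rw [h1, h2]
        push_cast
        rw [abs_lt] at hv ⊢
        constructor <;> linarith [hv.1, hv.2]
    constructor
    · -- balanced
      intro i j N
      have hsplit : ∀ x : ℕ, (zeroCountFrom v' x N : ℝ)
          = ((zeroCountFrom v' 0 (x+N) : ℝ) - (x+N) * ε) - ((zeroCountFrom v' 0 x : ℝ) - x * ε)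
            + N * ε := by
        intro x
        have h1 : zeroCountFrom v' 0 (x+N) = zeroCountFrom v' 0 x + zeroCountFrom v' x N := by
          have := zc_add v' 0 x N
          simpa using this
        rw [h1]
        push_cast
        ring
      have hreal : |(zeroCountFrom v' i N : ℝ) - (zeroCountFrom v' j N : ℝ)| < 2 := by
        rw [hsplit i, hsplit j]
        have h1 := hpair' (i+N) (j+N)
        have h2 := hpair' j i
        rw [abs_lt] at h1 h2 ⊢
        push_cast at h1 h2 ⊢
        constructor <;> linarith [h1.1, h1.2, h2.1, h2.2]
      have hint : |(zeroCountFrom v' i N : ℤ) - (zeroCountFrom v' j N : ℤ)| < 2 := by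
        exact_mod_cast hreal
      omega
    · exact aperiodic_of_irr hirr v' hdens'
end

section
/- If u is an aperiodic 3iet word coding the orbit of 0 under the exchange of three intervals I_A, I_B, I_C (permutation (321)) with irrational slope ε, then σ(u) and σ'(u) are sturmian words whose density of the letter 0 equals ε, where σ(A)=0, σ(B)=01, σ(C)=1 and σ'(A)=0, σ'(B)=10, σ'(C)=1. -/
/-- The exchange of three intervals `I_A = [c, c+l−1+ε)`, `I_B = [c+l−1+ε, c+ε)`,
`I_C = [c+ε, c+l)` with permutation (321), i.e. with translations
`1−ε`, `1−2ε`, `−ε`. -/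
noncomputable def T3iet (ε l c : ℝ) (x : ℝ) : ℝ :=
  if x < c + l - 1 + ε then x + 1 - ε
  else if x < c + ε then x + 1 - 2*ε
  else x - ε

/-- `v` is the image of the infinite word `u` under the morphism `σ`
(given by its values on letters). -/
def SubstImage {A B : Type*} (σ : A → List B) (u : ℕ → A) (v : ℕ → B) : Prop :=
  ∃ s : ℕ → ℕ, s 0 = 0 ∧ (∀ n, s (n + 1) = s n + (σ (u n)).length) ∧
    ∀ n k, (h : k < (σ (u n)).length) → v (s n + k) = (σ (u n)).get ⟨k, h⟩

/-- The morphism σ: A ↦ 0, B ↦ 01, C ↦ 1 (letters A,B,C coded by 0,1,2 in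
`Fin 3`, and 0,1 coded by `false`, `true`). -/
def sigma0 : Fin 3 → List Bool := ![[false], [false, true], [true]]

/-- The morphism σ': A ↦ 0, B ↦ 10, C ↦ 1. -/
def sigma1 : Fin 3 → List Bool := ![[false], [true, false], [true]]

/-! ### Auxiliary lemmas -/

lemma fract_shift {ε : ℝ} (hε0 : 0 < ε) (hε1 : ε < 1) (t : ℝ) :
    Int.fract (t - ε) = if Int.fract t < ε then Int.fract t + (1 - ε) else Int.fract t - ε := by
  have h1 := Int.fract_nonneg t
  have h2 := Int.fract_lt_one t
  have key : Int.fract (t - ε) = Int.fract (Int.fract t - ε) := by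
    rw [show t - ε = (Int.fract t - ε) + (⌊t⌋ : ℤ) by rw [Int.fract]; push_cast; ring,
      Int.fract_add_intCast]
  rw [key]
  split_ifs with h3
  · rw [show Int.fract t - ε = (Int.fract t + (1 - ε)) + ((-1 : ℤ) : ℝ) by push_cast; ring,
      Int.fract_add_intCast, Int.fract_eq_self.2 ⟨by linarith, by linarith⟩]
  · rw [Int.fract_eq_self.2 ⟨by linarith, by linarith⟩]

lemma floor_shift {ε : ℝ} (hε0 : 0 < ε) (hε1 : ε < 1) (t : ℝ) :
    ⌊t - ε⌋ = ⌊t⌋ - (if Int.fract t < ε then 1 else 0) := by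
  have h1 := Int.fract_nonneg t
  have h2 := Int.fract_lt_one t
  have hfr : Int.fract t = t - ⌊t⌋ := rfl
  split_ifs with h3
  · rw [Int.floor_eq_iff]
    constructor
    · push_cast; linarith
    · push_cast; linarith
  · rw [Int.floor_eq_iff]
    constructor
    · push_cast; linarith
    · push_cast; linarith

lemma count_succ (v : ℕ → Bool) (i n : ℕ) :
    zeroCountFrom v i (n + 1) =
      zeroCountFrom v i n + (if v (i + n) = false then 1 else 0) := by
  unfold zeroCountFrom
  rw [Finset.range_add_one, Finset.filter_insert]
  split_ifs with h
  · rw [Finset.card_insert_of_notMem (by simp)]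
  · rfl

section
variable {ε a : ℝ} {v : ℕ → Bool}

lemma count_formula (hε0 : 0 < ε) (hε1 : ε < 1)
    (hv : ∀ m : ℕ, v m = false ↔ Int.fract (a - m * ε) < ε) :
    ∀ i n : ℕ, (zeroCountFrom v i n : ℤ) = ⌊a - i * ε⌋ - ⌊a - (i + n : ℕ) * ε⌋ := by
  intro i n
  induction n with
  | zero => simp [zeroCountFrom]
  | succ n ih =>
    rw [count_succ, Nat.cast_add, ih]
    have e1 : a - ((i + (n+1) : ℕ) : ℝ) * ε = (a - ((i + n : ℕ) : ℝ) * ε) - ε := by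
      push_cast; ring
    rw [e1, floor_shift hε0 hε1]
    have := hv (i + n)
    split_ifs with h1 h2 h2
    · push_cast; ring
    · exact absurd (this.1 h1) h2
    · exact absurd (this.2 h2) (by simpa using h1)
    · push_cast; ring

lemma count_bound (hε0 : 0 < ε) (hε1 : ε < 1)
    (hv : ∀ m : ℕ, v m = false ↔ Int.fract (a - m * ε) < ε) (i n : ℕ) :
    |(zeroCountFrom v i n : ℝ) - n * ε| < 1 := by
  have h := count_formula hε0 hε1 hv i n
  have h' : (zeroCountFrom v i n : ℝ) = ⌊a - i * ε⌋ - ⌊a - (i + n : ℕ) * ε⌋ := by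
    exact_mod_cast congrArg (Int.cast : ℤ → ℝ) h
  have b1 := Int.floor_le (a - i * ε)
  have b2 := Int.lt_floor_add_one (a - i * ε)
  have b3 := Int.floor_le (a - (i + n : ℕ) * ε)
  have b4 := Int.lt_floor_add_one (a - (i + n : ℕ) * ε)
  rw [abs_lt]
  push_cast at h' b1 b2 b3 b4 ⊢
  constructor <;> nlinarith

lemma count_congr {i j n : ℕ} (h : ∀ k < n, v (i + k) = v (j + k)) :
    zeroCountFrom v i n = zeroCountFrom v j n := by
  unfold zeroCountFrom
  congr 1
  apply Finset.filter_congr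
  intro k hk
  simp [h k (Finset.mem_range.1 hk)]

lemma count_add (i m n : ℕ) :
    zeroCountFrom v i (m + n) = zeroCountFrom v i m + zeroCountFrom v (i + m) n := by
  induction n with
  | zero => simp [zeroCountFrom]
  | succ n ih =>
    rw [show m + (n+1) = (m+n) + 1 by ring, count_succ, ih, count_succ,
      show i + (m + n) = i + m + n by ring]
    ring

lemma sturmian_of_fract (hε0 : 0 < ε) (hε1 : ε < 1)
    (hirr : Irrational ε)
    (hv : ∀ m : ℕ, v m = false ↔ Int.fract (a - m * ε) < ε) :
    IsSturmian v ∧ Filter.Tendsto (fun m => (zeroCountFrom v 0 m : ℝ) / m)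
      Filter.atTop (nhds ε) := by
  have bound := count_bound hε0 hε1 hv
  refine ⟨⟨?_, ?_⟩, ?_⟩
  · -- balanced
    intro i j n
    have b1 := bound i n
    have b2 := bound j n
    have h2 : ((|(zeroCountFrom v i n : ℤ) - (zeroCountFrom v j n : ℤ)| : ℤ) : ℝ) < 2 := by
      rw [abs_lt] at b1 b2
      push_cast
      rw [abs_lt]
      constructor <;> push_cast <;> linarith
    have h3 : |(zeroCountFrom v i n : ℤ) - (zeroCountFrom v j n : ℤ)| < 2 := by
      exact_mod_cast h2
    omega
  · -- aperiodic
    rintro ⟨p, hp, N, hper⟩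
    have hblock : ∀ j : ℕ, zeroCountFrom v (N + j * p) p = zeroCountFrom v N p := by
      intro j
      induction j with
      | zero => simp
      | succ j ih =>
        rw [← ih]
        apply count_congr
        intro k hk
        rw [show N + (j+1)*p + k = (N + j*p + k) + p by ring]
        exact hper _ (by omega)
    have hmul : ∀ m : ℕ, zeroCountFrom v N (m * p) = m * zeroCountFrom v N p := by
      intro m
      induction m with
      | zero => simp [zeroCountFrom]
      | succ m ih =>
        rw [show (m+1)*p = m*p + p by ring, count_add, ih, hblock]; ring
    set Z : ℕ := zeroCountFrom v N p with hZ
    have key : ∀ m : ℕ, 1 ≤ m → |(Z : ℝ) - p * ε| < 1 / m := by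
      intro m hm
      have hb := bound N (m * p)
      rw [hmul] at hb
      have hm' : (0:ℝ) < m := by exact_mod_cast hm
      rw [abs_lt] at hb ⊢
      push_cast at hb
      constructor
      · rw [neg_lt, lt_div_iff₀ hm']
        nlinarith [hb.1]
      · rw [lt_div_iff₀ hm']
        nlinarith [hb.2]
    have hZeq : (Z : ℝ) = p * ε := by
      by_contra hne
      have hpos : 0 < |(Z : ℝ) - p * ε| := abs_pos.2 (sub_ne_zero.2 hne)
      obtain ⟨m, hm⟩ := exists_nat_gt (1 / |(Z : ℝ) - p * ε|)
      have hm1 : 1 ≤ m := by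
        by_contra h
        push_neg at h
        interval_cases m
        simp only [Nat.cast_zero] at hm
        have hδ : (0:ℝ) < 1 / |(Z : ℝ) - p * ε| := by positivity
        linarith
      have := key m hm1
      rw [div_lt_iff₀ hpos] at hm
      rw [lt_div_iff₀ (by exact_mod_cast hm1 : (0:ℝ) < m)] at this
      nlinarith
    exact hirr ⟨(Z : ℚ) / (p : ℚ), by
      push_cast
      rw [div_eq_iff (by exact_mod_cast hp.ne' : ((p:ℝ)) ≠ 0)]
      linarith [hZeq]⟩
  · -- density
    have h0 : Filter.Tendsto (fun m : ℕ => (zeroCountFrom v 0 m : ℝ) / m - ε)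
        Filter.atTop (nhds 0) := by
      refine squeeze_zero_norm' (a := fun m : ℕ => 1 / (m : ℝ)) ?_
        tendsto_one_div_atTop_nhds_zero_nat
      filter_upwards [Filter.eventually_ge_atTop 1] with m hm
      have hm' : (0:ℝ) < m := by exact_mod_cast hm
      have hb := bound 0 m
      have e : (zeroCountFrom v 0 m : ℝ)/m - ε = ((zeroCountFrom v 0 m : ℝ) - m*ε)/m := by
        field_simp
      rw [Real.norm_eq_abs, e, abs_div, abs_of_pos hm']
      exact (div_le_div_iff_of_pos_right hm').2 hb.le
    have := h0.add_const ε
    simpa using this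

end

/-- Every block of the substitution has length at least one, so the index
function of a substitution image is (strictly) increasing and hits every index. -/
lemma subst_index_surj {s : ℕ → ℕ} (hs0 : s 0 = 0)
    (hmono : ∀ n, s n + 1 ≤ s (n + 1)) (m : ℕ) :
    ∃ n, s n ≤ m ∧ m < s (n + 1) := by
  induction m with
  | zero => exact ⟨0, by omega, by have := hmono 0; omega⟩
  | succ m ih =>
    obtain ⟨n, h1, h2⟩ := ih
    by_cases h : m + 1 < s (n + 1)
    · exact ⟨n, by omega, h⟩
    · exact ⟨n + 1, by omega, by have := hmono (n + 1); omega⟩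

/-- if u is an aperiodic 3iet word with irrational slope ε, then
σ(u) and σ'(u) are sturmian words whose density of the letter 0 equals ε. -/
theorem stmt_7 (ε l c : ℝ) (hε : ε ∈ Set.Ioo (0:ℝ) 1) (hirr : Irrational ε)
    (hl : max ε (1 - ε) < l) (hl1 : l < 1) (hc : -l < c) (hc0 : c ≤ 0)
    (u : ℕ → Fin 3)
    (hu : ∀ n : ℕ,
      ((T3iet ε l c)^[n] 0 ∈ Set.Ico c (c + l - 1 + ε) → u n = 0) ∧
      ((T3iet ε l c)^[n] 0 ∈ Set.Ico (c + l - 1 + ε) (c + ε) → u n = 1) ∧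
      ((T3iet ε l c)^[n] 0 ∈ Set.Ico (c + ε) (c + l) → u n = 2)) :
    (∀ v : ℕ → Bool, SubstImage sigma0 u v →
      IsSturmian v ∧ Filter.Tendsto (fun m => (zeroCountFrom v 0 m : ℝ) / m)
        Filter.atTop (nhds ε)) ∧
    (∀ v : ℕ → Bool, SubstImage sigma1 u v →
      IsSturmian v ∧ Filter.Tendsto (fun m => (zeroCountFrom v 0 m : ℝ) / m)
        Filter.atTop (nhds ε)) := by
  obtain ⟨hε0, hε1⟩ := hε
  have hεl : ε < l := lt_of_le_of_lt (le_max_left _ _) hl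
  have h1εl : 1 - ε < l := lt_of_le_of_lt (le_max_right _ _) hl
  constructor
  · -- σ : A ↦ 0, B ↦ 01, C ↦ 1, coded by rotation on the circle [c, c+1)
    intro v hsub
    obtain ⟨s, hs0, hsrec, hsval⟩ := hsub
    apply sturmian_of_fract (a := -c) hε0 hε1 hirr
    have step : ∀ n, ((T3iet ε l c)^[n] 0 ∈ Set.Ico c (c + l) ∧
        (T3iet ε l c)^[n] 0 = c + Int.fract (-c - (s n : ℝ) * ε)) →
        ((T3iet ε l c)^[n+1] 0 ∈ Set.Ico c (c + l) ∧
          (T3iet ε l c)^[n+1] 0 = c + Int.fract (-c - (s (n+1) : ℝ) * ε)) ∧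
        ∀ k, k < (sigma0 (u n)).length →
          (v (s n + k) = false ↔ Int.fract (-c - ((s n + k : ℕ) : ℝ) * ε) < ε) := by
      rintro n ⟨⟨hxl, hxr⟩, heq⟩
      set x := (T3iet ε l c)^[n] 0 with hxdef
      have hfrx : Int.fract (-c - (s n : ℝ) * ε) = x - c := by rw [heq]; ring
      have hxl' : c ≤ x := hxl
      have hxr' : x < c + l := hxr
      rcases lt_or_ge x (c + l - 1 + ε) with hA | hA
      · -- letter A
        have hun : u n = 0 := (hu n).1 ⟨hxl', hA⟩
        have hlen : (sigma0 (u n)).length = 1 := by rw [hun]; rfl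
        have hs1 : s (n+1) = s n + 1 := by rw [hsrec n, hlen]
        have hTx : (T3iet ε l c)^[n+1] 0 = x + 1 - ε := by
          rw [Function.iterate_succ_apply', ← hxdef]
          unfold T3iet
          rw [if_pos hA]
        have hcond : Int.fract (-c - (s n : ℝ) * ε) < ε := by
          rw [hfrx]; linarith
        have hfr1 : Int.fract (-c - ((s n + 1 : ℕ) : ℝ) * ε) = x - c + (1 - ε) := by
          rw [show (-c - ((s n + 1 : ℕ) : ℝ) * ε) = (-c - ((s n : ℕ) : ℝ) * ε) - ε by
            push_cast; ring, fract_shift hε0 hε1, if_pos hcond, hfrx]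
        refine ⟨⟨⟨by linarith, by linarith⟩, ?_⟩, ?_⟩
        · rw [hTx, hs1, hfr1]; ring
        · intro k hk
          rw [hlen] at hk
          interval_cases k
          have hL : sigma0 (u n) = [false] := by rw [hun]; rfl
          have hval := hsval n 0 (by rw [hlen]; norm_num)
          rw [List.get_of_eq hL] at hval
          simp only [List.get] at hval
          simp only [Nat.add_zero] at hval ⊢
          simp only [hval, hfrx]
          exact ⟨fun _ => by linarith, fun _ => trivial⟩
      · rcases lt_or_ge x (c + ε) with hB | hC
        · -- letter B
          have hun : u n = 1 := (hu n).2.1 ⟨hA, hB⟩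
          have hlen : (sigma0 (u n)).length = 2 := by rw [hun]; rfl
          have hs1 : s (n+1) = s n + 2 := by rw [hsrec n, hlen]
          have hTx : (T3iet ε l c)^[n+1] 0 = x + 1 - 2*ε := by
            rw [Function.iterate_succ_apply', ← hxdef]
            unfold T3iet
            rw [if_neg (not_lt.2 hA), if_pos hB]
          have hcond : Int.fract (-c - (s n : ℝ) * ε) < ε := by
            rw [hfrx]; linarith
          have hfr1 : Int.fract (-c - ((s n + 1 : ℕ) : ℝ) * ε) = x - c + (1 - ε) := by
            rw [show (-c - ((s n + 1 : ℕ) : ℝ) * ε) = (-c - ((s n : ℕ) : ℝ) * ε) - ε by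
              push_cast; ring, fract_shift hε0 hε1, if_pos hcond, hfrx]
          have hcond2 : ¬ Int.fract (-c - ((s n + 1 : ℕ) : ℝ) * ε) < ε := by
            rw [hfr1]; push_neg; linarith
          have hfr2 : Int.fract (-c - ((s n + 2 : ℕ) : ℝ) * ε) = x - c + (1 - ε) - ε := by
            rw [show (-c - ((s n + 2 : ℕ) : ℝ) * ε) = (-c - ((s n + 1 : ℕ) : ℝ) * ε) - ε by
              push_cast; ring, fract_shift hε0 hε1, if_neg hcond2, hfr1]
          refine ⟨⟨⟨by linarith, by linarith⟩, ?_⟩, ?_⟩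
          · rw [hTx, hs1, hfr2]; ring
          · intro k hk
            rw [hlen] at hk
            have hL : sigma0 (u n) = [false, true] := by rw [hun]; rfl
            interval_cases k
            · have hval := hsval n 0 (by rw [hlen]; norm_num)
              rw [List.get_of_eq hL] at hval
              simp only [List.get] at hval
              simp only [Nat.add_zero] at hval ⊢
              simp only [hval, hfrx]
              exact ⟨fun _ => by linarith, fun _ => trivial⟩
            · have hval := hsval n 1 (by rw [hlen]; norm_num)
              rw [List.get_of_eq hL] at hval
              simp only [List.get] at hval
              simp only [hval, hfr1]
              constructor
              · intro h; exact absurd h (by simp)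
              · intro h; exact absurd h (by push_neg; linarith)
        · -- letter C
          have hun : u n = 2 := (hu n).2.2 ⟨hC, hxr'⟩
          have hlen : (sigma0 (u n)).length = 1 := by rw [hun]; rfl
          have hs1 : s (n+1) = s n + 1 := by rw [hsrec n, hlen]
          have hTx : (T3iet ε l c)^[n+1] 0 = x - ε := by
            rw [Function.iterate_succ_apply', ← hxdef]
            unfold T3iet
            rw [if_neg (not_lt.2 hA), if_neg (not_lt.2 hC)]
          have hcond : ¬ Int.fract (-c - (s n : ℝ) * ε) < ε := by
            rw [hfrx]; push_neg; linarith
          have hfr1 : Int.fract (-c - ((s n + 1 : ℕ) : ℝ) * ε) = x - c - ε := by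
            rw [show (-c - ((s n + 1 : ℕ) : ℝ) * ε) = (-c - ((s n : ℕ) : ℝ) * ε) - ε by
              push_cast; ring, fract_shift hε0 hε1, if_neg hcond, hfrx]
          refine ⟨⟨⟨by linarith, by linarith⟩, ?_⟩, ?_⟩
          · rw [hTx, hs1, hfr1]; ring
          · intro k hk
            rw [hlen] at hk
            interval_cases k
            have hL : sigma0 (u n) = [true] := by rw [hun]; rfl
            have hval := hsval n 0 (by rw [hlen]; norm_num)
            rw [List.get_of_eq hL] at hval
            simp only [List.get] at hval
            simp only [Nat.add_zero] at hval ⊢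
            simp only [hval, hfrx]
            constructor
            · intro h; exact absurd h (by simp)
            · intro h; exact absurd h (by push_neg; linarith)
    have main : ∀ n, (T3iet ε l c)^[n] 0 ∈ Set.Ico c (c + l) ∧
        (T3iet ε l c)^[n] 0 = c + Int.fract (-c - (s n : ℝ) * ε) := by
      intro n
      induction n with
      | zero =>
        simp only [Function.iterate_zero_apply]
        constructor
        · exact ⟨by linarith, by linarith⟩
        · rw [hs0, Nat.cast_zero, zero_mul, sub_zero,
            Int.fract_eq_self.2 ⟨by linarith, by linarith⟩]
          ring
      | succ n ih => exact (step n ih).1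
    have coding : ∀ n k, k < (sigma0 (u n)).length →
        (v (s n + k) = false ↔ Int.fract (-c - ((s n + k : ℕ) : ℝ) * ε) < ε) :=
      fun n => (step n (main n)).2
    have hmono : ∀ n, s n + 1 ≤ s (n + 1) := by
      intro n
      rw [hsrec n]
      have h3 : ∀ w : Fin 3, 1 ≤ (sigma0 w).length := by decide
      have := h3 (u n)
      omega
    intro m
    obtain ⟨n, h1, h2⟩ := subst_index_surj hs0 hmono m
    have hk : m - s n < (sigma0 (u n)).length := by
      have := hsrec n; omega
    have := coding n (m - s n) hk
    rwa [Nat.add_sub_cancel' h1] at this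
  · -- σ' : A ↦ 0, B ↦ 10, C ↦ 1, coded by rotation on the circle [c+l-1, c+l)
    intro v hsub
    obtain ⟨s, hs0, hsrec, hsval⟩ := hsub
    apply sturmian_of_fract (a := 1 - l - c) hε0 hε1 hirr
    have step : ∀ n, ((T3iet ε l c)^[n] 0 ∈ Set.Ico c (c + l) ∧
        (T3iet ε l c)^[n] 0 = (c + l - 1) + Int.fract ((1 - l - c) - (s n : ℝ) * ε)) →
        ((T3iet ε l c)^[n+1] 0 ∈ Set.Ico c (c + l) ∧
          (T3iet ε l c)^[n+1] 0 = (c + l - 1) + Int.fract ((1 - l - c) - (s (n+1) : ℝ) * ε)) ∧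
        ∀ k, k < (sigma1 (u n)).length →
          (v (s n + k) = false ↔ Int.fract ((1 - l - c) - ((s n + k : ℕ) : ℝ) * ε) < ε) := by
      rintro n ⟨⟨hxl, hxr⟩, heq⟩
      set x := (T3iet ε l c)^[n] 0 with hxdef
      have hfrx : Int.fract ((1 - l - c) - (s n : ℝ) * ε) = x - (c + l - 1) := by
        rw [heq]; ring
      have hxl' : c ≤ x := hxl
      have hxr' : x < c + l := hxr
      rcases lt_or_ge x (c + l - 1 + ε) with hA | hA
      · -- letter A
        have hun : u n = 0 := (hu n).1 ⟨hxl', hA⟩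
        have hlen : (sigma1 (u n)).length = 1 := by rw [hun]; rfl
        have hs1 : s (n+1) = s n + 1 := by rw [hsrec n, hlen]
        have hTx : (T3iet ε l c)^[n+1] 0 = x + 1 - ε := by
          rw [Function.iterate_succ_apply', ← hxdef]
          unfold T3iet
          rw [if_pos hA]
        have hcond : Int.fract ((1 - l - c) - (s n : ℝ) * ε) < ε := by
          rw [hfrx]; linarith
        have hfr1 : Int.fract ((1 - l - c) - ((s n + 1 : ℕ) : ℝ) * ε)
            = x - (c + l - 1) + (1 - ε) := by
          rw [show ((1 - l - c) - ((s n + 1 : ℕ) : ℝ) * ε)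
              = ((1 - l - c) - ((s n : ℕ) : ℝ) * ε) - ε by
            push_cast; ring, fract_shift hε0 hε1, if_pos hcond, hfrx]
        refine ⟨⟨⟨by linarith, by linarith⟩, ?_⟩, ?_⟩
        · rw [hTx, hs1, hfr1]; ring
        · intro k hk
          rw [hlen] at hk
          interval_cases k
          have hL : sigma1 (u n) = [false] := by rw [hun]; rfl
          have hval := hsval n 0 (by rw [hlen]; norm_num)
          rw [List.get_of_eq hL] at hval
          simp only [List.get] at hval
          simp only [Nat.add_zero] at hval ⊢
          simp only [hval, hfrx]
          exact ⟨fun _ => by linarith, fun _ => trivial⟩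
      · rcases lt_or_ge x (c + ε) with hB | hC
        · -- letter B
          have hun : u n = 1 := (hu n).2.1 ⟨hA, hB⟩
          have hlen : (sigma1 (u n)).length = 2 := by rw [hun]; rfl
          have hs1 : s (n+1) = s n + 2 := by rw [hsrec n, hlen]
          have hTx : (T3iet ε l c)^[n+1] 0 = x + 1 - 2*ε := by
            rw [Function.iterate_succ_apply', ← hxdef]
            unfold T3iet
            rw [if_neg (not_lt.2 hA), if_pos hB]
          have hcond : ¬ Int.fract ((1 - l - c) - (s n : ℝ) * ε) < ε := by
            rw [hfrx]; push_neg; linarith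
          have hfr1 : Int.fract ((1 - l - c) - ((s n + 1 : ℕ) : ℝ) * ε)
              = x - (c + l - 1) - ε := by
            rw [show ((1 - l - c) - ((s n + 1 : ℕ) : ℝ) * ε)
                = ((1 - l - c) - ((s n : ℕ) : ℝ) * ε) - ε by
              push_cast; ring, fract_shift hε0 hε1, if_neg hcond, hfrx]
          have hcond2 : Int.fract ((1 - l - c) - ((s n + 1 : ℕ) : ℝ) * ε) < ε := by
            rw [hfr1]; linarith
          have hfr2 : Int.fract ((1 - l - c) - ((s n + 2 : ℕ) : ℝ) * ε)
              = x - (c + l - 1) - ε + (1 - ε) := by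
            rw [show ((1 - l - c) - ((s n + 2 : ℕ) : ℝ) * ε)
                = ((1 - l - c) - ((s n + 1 : ℕ) : ℝ) * ε) - ε by
              push_cast; ring, fract_shift hε0 hε1, if_pos hcond2, hfr1]
          refine ⟨⟨⟨by linarith, by linarith⟩, ?_⟩, ?_⟩
          · rw [hTx, hs1, hfr2]; ring
          · intro k hk
            rw [hlen] at hk
            have hL : sigma1 (u n) = [true, false] := by rw [hun]; rfl
            interval_cases k
            · have hval := hsval n 0 (by rw [hlen]; norm_num)
              rw [List.get_of_eq hL] at hval
              simp only [List.get] at hval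
              simp only [Nat.add_zero] at hval ⊢
              simp only [hval, hfrx]
              constructor
              · intro h; exact absurd h (by simp)
              · intro h; exact absurd h (by push_neg; linarith)
            · have hval := hsval n 1 (by rw [hlen]; norm_num)
              rw [List.get_of_eq hL] at hval
              simp only [List.get] at hval
              simp only [hval, hfr1]
              exact ⟨fun _ => by linarith, fun _ => trivial⟩
        · -- letter C
          have hun : u n = 2 := (hu n).2.2 ⟨hC, hxr'⟩
          have hlen : (sigma1 (u n)).length = 1 := by rw [hun]; rfl
          have hs1 : s (n+1) = s n + 1 := by rw [hsrec n, hlen]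
          have hTx : (T3iet ε l c)^[n+1] 0 = x - ε := by
            rw [Function.iterate_succ_apply', ← hxdef]
            unfold T3iet
            rw [if_neg (not_lt.2 hA), if_neg (not_lt.2 hC)]
          have hcond : ¬ Int.fract ((1 - l - c) - (s n : ℝ) * ε) < ε := by
            rw [hfrx]; push_neg; linarith
          have hfr1 : Int.fract ((1 - l - c) - ((s n + 1 : ℕ) : ℝ) * ε)
              = x - (c + l - 1) - ε := by
            rw [show ((1 - l - c) - ((s n + 1 : ℕ) : ℝ) * ε)
                = ((1 - l - c) - ((s n : ℕ) : ℝ) * ε) - ε by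
              push_cast; ring, fract_shift hε0 hε1, if_neg hcond, hfrx]
          refine ⟨⟨⟨by linarith, by linarith⟩, ?_⟩, ?_⟩
          · rw [hTx, hs1, hfr1]; ring
          · intro k hk
            rw [hlen] at hk
            interval_cases k
            have hL : sigma1 (u n) = [true] := by rw [hun]; rfl
            have hval := hsval n 0 (by rw [hlen]; norm_num)
            rw [List.get_of_eq hL] at hval
            simp only [List.get] at hval
            simp only [Nat.add_zero] at hval ⊢
            simp only [hval, hfrx]
            constructor
            · intro h; exact absurd h (by simp)
            · intro h; exact absurd h (by push_neg; linarith)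
    have main : ∀ n, (T3iet ε l c)^[n] 0 ∈ Set.Ico c (c + l) ∧
        (T3iet ε l c)^[n] 0 = (c + l - 1) + Int.fract ((1 - l - c) - (s n : ℝ) * ε) := by
      intro n
      induction n with
      | zero =>
        simp only [Function.iterate_zero_apply]
        constructor
        · exact ⟨by linarith, by linarith⟩
        · rw [hs0, Nat.cast_zero, zero_mul, sub_zero,
            Int.fract_eq_self.2 ⟨by linarith, by linarith⟩]
          ring
      | succ n ih => exact (step n ih).1
    have coding : ∀ n k, k < (sigma1 (u n)).length →
        (v (s n + k) = false ↔ Int.fract ((1 - l - c) - ((s n + k : ℕ) : ℝ) * ε) < ε) :=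
      fun n => (step n (main n)).2
    have hmono : ∀ n, s n + 1 ≤ s (n + 1) := by
      intro n
      rw [hsrec n]
      have h3 : ∀ w : Fin 3, 1 ≤ (sigma1 w).length := by decide
      have := h3 (u n)
      omega
    intro m
    obtain ⟨n, h1, h2⟩ := subst_index_surj hs0 hmono m
    have hk : m - s n < (sigma1 (u n)).length := by
      have := hsrec n; omega
    have := coding n (m - s n) hk
    rwa [Nat.add_sub_cancel' h1] at this
end

section
/- The factor complexity of any word coding an exchange of three intervals satisfies C(n) ≤ 2n + 1 for all n. -/
lemma ietMaps {α β γ : ℝ} (hα : 0 < α) (hβ : 0 < β) (hγ : 0 < γ) :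
    ∀ y ∈ Set.Ico (0:ℝ) (α+β+γ), threeIET α β γ y ∈ Set.Ico (0:ℝ) (α+β+γ) := by
  rintro y ⟨h0, hL⟩
  unfold threeIET
  split_ifs with h1 h2 <;> constructor <;> linarith

lemma iterMaps {α β γ : ℝ} (hα : 0 < α) (hβ : 0 < β) (hγ : 0 < γ) :
    ∀ (k : ℕ) (y : ℝ), y ∈ Set.Ico (0:ℝ) (α+β+γ) →
      (threeIET α β γ)^[k] y ∈ Set.Ico (0:ℝ) (α+β+γ) := by
  intro k
  induction k with
  | zero => intro y hy; simpa using hy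
  | succ k ih =>
    intro y hy
    rw [Function.iterate_succ_apply']
    exact ietMaps hα hβ hγ _ (ih y hy)

lemma ietInjOn {α β γ : ℝ} (hα : 0 < α) (hβ : 0 < β) (hγ : 0 < γ) :
    Set.InjOn (threeIET α β γ) (Set.Ico (0:ℝ) (α+β+γ)) := by
  rintro y ⟨hy0, hyL⟩ z ⟨hz0, hzL⟩ h
  unfold threeIET at h
  split_ifs at h <;> linarith

lemma iterInjOn {α β γ : ℝ} (hα : 0 < α) (hβ : 0 < β) (hγ : 0 < γ) :
    ∀ k : ℕ, Set.InjOn ((threeIET α β γ)^[k]) (Set.Ico (0:ℝ) (α+β+γ)) := by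
  intro k
  induction k with
  | zero => simp [Set.injOn_id]
  | succ k ih =>
    rw [Function.iterate_succ]
    exact ih.comp (ietInjOn hα hβ hγ) (fun y hy => ietMaps hα hβ hγ y hy)

lemma stepLem {α β γ : ℝ} (y z t : ℝ) (hyz : y ≤ z)
    (hA : ¬(y < α ∧ α ≤ z)) (hB : ¬(y < α+β ∧ α+β ≤ z))
    (hty : y ≤ t) (htz : t ≤ z) :
    threeIET α β γ t = threeIET α β γ y + (t - y) := by
  by_cases h1 : y < α
  · have hz1 : z < α := by
      by_contra h
      exact hA ⟨h1, not_lt.mp h⟩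
    have ht : t < α := lt_of_le_of_lt htz hz1
    simp only [threeIET, if_pos h1, if_pos ht]; ring
  · by_cases h2 : y < α + β
    · have hz2 : z < α + β := by
        by_contra h
        exact hB ⟨h2, not_lt.mp h⟩
      have ht1 : ¬ t < α := not_lt.mpr (le_trans (not_lt.mp h1) hty)
      have ht2 : t < α + β := lt_of_le_of_lt htz hz2
      simp only [threeIET, if_neg h1, if_pos h2, if_neg ht1, if_pos ht2]; ring
    · have ht1 : ¬ t < α := not_lt.mpr (le_trans (not_lt.mp h1) hty)
      have ht2 : ¬ t < α + β := not_lt.mpr (le_trans (not_lt.mp h2) hty)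
      simp only [threeIET, if_neg h1, if_neg h2, if_neg ht1, if_neg ht2]; ring

lemma keyLem {α β γ : ℝ} (hα : 0 < α) (hβ : 0 < β) (hγ : 0 < γ) (n : ℕ) (y z : ℝ)
    (hy : y ∈ Set.Ico (0:ℝ) (α+β+γ)) (hz : z ∈ Set.Ico (0:ℝ) (α+β+γ)) (hyz : y ≤ z)
    (hD : ∀ t, y < t → t ≤ z → ∀ j, j < n →
      (threeIET α β γ)^[j] t ≠ α ∧ (threeIET α β γ)^[j] t ≠ α + β) :
    ∀ k, k ≤ n → ∀ t, y ≤ t → t ≤ z →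
      (threeIET α β γ)^[k] t = (threeIET α β γ)^[k] y + (t - y) := by
  intro k
  induction k with
  | zero => intro _ t _ _; simp
  | succ k ih =>
    intro hk1 t hty htz
    have hk : k ≤ n := le_of_lt (Nat.lt_of_succ_le hk1)
    have hkn : k < n := Nat.lt_of_succ_le hk1
    have IH := ih hk
    have hZeq : (threeIET α β γ)^[k] z = (threeIET α β γ)^[k] y + (z - y) :=
      IH z hyz le_rfl
    have hYI := iterMaps hα hβ hγ k y hy
    have hZI := iterMaps hα hβ hγ k z hz
    have hcrossA : ¬((threeIET α β γ)^[k] y < α ∧ α ≤ (threeIET α β γ)^[k] z) := by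
      rintro ⟨c1, c2⟩
      set s := y + (α - (threeIET α β γ)^[k] y) with hs
      have hs1 : y < s := by simp only [hs]; linarith
      have hs2 : s ≤ z := by
        rw [hZeq] at c2; simp only [hs]; linarith
      have hsα : (threeIET α β γ)^[k] s = α := by
        rw [IH s hs1.le hs2]; simp only [hs]; ring
      exact (hD s hs1 hs2 k hkn).1 hsα
    have hcrossB : ¬((threeIET α β γ)^[k] y < α + β ∧ α + β ≤ (threeIET α β γ)^[k] z) := by
      rintro ⟨c1, c2⟩
      set s := y + (α + β - (threeIET α β γ)^[k] y) with hs
      have hs1 : y < s := by simp only [hs]; linarith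
      have hs2 : s ≤ z := by
        rw [hZeq] at c2; simp only [hs]; linarith
      have hsα : (threeIET α β γ)^[k] s = α + β := by
        rw [IH s hs1.le hs2]; simp only [hs]; ring
      exact (hD s hs1 hs2 k hkn).2 hsα
    have htk : (threeIET α β γ)^[k] t = (threeIET α β γ)^[k] y + (t - y) :=
      IH t hty htz
    rw [Function.iterate_succ_apply', Function.iterate_succ_apply', htk]
    have := stepLem (α := α) (β := β) (γ := γ)
      ((threeIET α β γ)^[k] y) ((threeIET α β γ)^[k] z)
      ((threeIET α β γ)^[k] y + (t - y))
      (by rw [hZeq]; linarith) hcrossA hcrossB (by linarith)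
      (by rw [hZeq]; linarith)
    rw [this]; ring

lemma uEq {α β γ : ℝ} (hα : 0 < α) (hβ : 0 < β) (hγ : 0 < γ)
    (x : ℝ) (hx : x ∈ Set.Ico (0:ℝ) (α + β + γ))
    (u : ℕ → Fin 3)
    (hu : ∀ n : ℕ,
      ((threeIET α β γ)^[n] x ∈ Set.Ico (0:ℝ) α → u n = 0) ∧
      ((threeIET α β γ)^[n] x ∈ Set.Ico α (α + β) → u n = 1) ∧
      ((threeIET α β γ)^[n] x ∈ Set.Ico (α + β) (α + β + γ) → u n = 2))
    (n : ℕ) (a b : ℕ)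
    (hab : (threeIET α β γ)^[a] x ≤ (threeIET α β γ)^[b] x)
    (hgap : ∀ t, 0 ≤ t → t < α+β+γ →
      (∃ j, j < n ∧ ((threeIET α β γ)^[j] t = α ∨ (threeIET α β γ)^[j] t = α + β)) →
      ¬((threeIET α β γ)^[a] x < t ∧ t ≤ (threeIET α β γ)^[b] x)) :
    ∀ k, k < n → u (a + k) = u (b + k) := by
  intro k hk
  set y := (threeIET α β γ)^[a] x with hydef
  set z := (threeIET α β γ)^[b] x with hzdef
  have hy : y ∈ Set.Ico (0:ℝ) (α+β+γ) := iterMaps hα hβ hγ a x hx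
  have hz : z ∈ Set.Ico (0:ℝ) (α+β+γ) := iterMaps hα hβ hγ b x hx
  have hD : ∀ t, y < t → t ≤ z → ∀ j, j < n →
      (threeIET α β γ)^[j] t ≠ α ∧ (threeIET α β γ)^[j] t ≠ α + β := by
    intro t h1 h2 j hj
    have ht0 : 0 ≤ t := le_of_lt (lt_of_le_of_lt hy.1 h1)
    have htL : t < α+β+γ := lt_of_le_of_lt h2 hz.2
    constructor <;> intro heq
    · exact hgap t ht0 htL ⟨j, hj, Or.inl heq⟩ ⟨h1, h2⟩
    · exact hgap t ht0 htL ⟨j, hj, Or.inr heq⟩ ⟨h1, h2⟩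
  have htr := keyLem hα hβ hγ n y z hy hz hab hD
  have hZeq : (threeIET α β γ)^[k] z = (threeIET α β γ)^[k] y + (z - y) :=
    htr k hk.le z hab le_rfl
  have hY := iterMaps hα hβ hγ k y hy
  have hZ := iterMaps hα hβ hγ k z hz
  have hcrossA : ¬((threeIET α β γ)^[k] y < α ∧ α ≤ (threeIET α β γ)^[k] z) := by
    rintro ⟨c1, c2⟩
    set s := y + (α - (threeIET α β γ)^[k] y) with hs
    have hs1 : y < s := by simp only [hs]; linarith
    have hs2 : s ≤ z := by rw [hZeq] at c2; simp only [hs]; linarith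
    have hsα : (threeIET α β γ)^[k] s = α := by
      rw [htr k hk.le s hs1.le hs2]; simp only [hs]; ring
    exact (hD s hs1 hs2 k hk).1 hsα
  have hcrossB : ¬((threeIET α β γ)^[k] y < α + β ∧ α + β ≤ (threeIET α β γ)^[k] z) := by
    rintro ⟨c1, c2⟩
    set s := y + (α + β - (threeIET α β γ)^[k] y) with hs
    have hs1 : y < s := by simp only [hs]; linarith
    have hs2 : s ≤ z := by rw [hZeq] at c2; simp only [hs]; linarith
    have hsα : (threeIET α β γ)^[k] s = α + β := by
      rw [htr k hk.le s hs1.le hs2]; simp only [hs]; ring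
    exact (hD s hs1 hs2 k hk).2 hsα
  have hya : (threeIET α β γ)^[a + k] x = (threeIET α β γ)^[k] y := by
    rw [add_comm, Function.iterate_add_apply]
  have hyb : (threeIET α β γ)^[b + k] x = (threeIET α β γ)^[k] z := by
    rw [add_comm, Function.iterate_add_apply]
  by_cases c1 : (threeIET α β γ)^[k] y < α
  · have c2 : (threeIET α β γ)^[k] z < α := by
      by_contra h
      exact hcrossA ⟨c1, not_lt.mp h⟩
    rw [(hu (a+k)).1 (by rw [hya]; exact ⟨hY.1, c1⟩),
        (hu (b+k)).1 (by rw [hyb]; exact ⟨hZ.1, c2⟩)]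
  · by_cases c3 : (threeIET α β γ)^[k] y < α + β
    · have c4 : (threeIET α β γ)^[k] z < α + β := by
        by_contra h
        exact hcrossB ⟨c3, not_lt.mp h⟩
      have c5 : α ≤ (threeIET α β γ)^[k] z := by
        rw [hZeq]; have := not_lt.mp c1; linarith
      rw [(hu (a+k)).2.1 (by rw [hya]; exact ⟨not_lt.mp c1, c3⟩),
          (hu (b+k)).2.1 (by rw [hyb]; exact ⟨c5, c4⟩)]
    · have c6 : α + β ≤ (threeIET α β γ)^[k] z := by
        rw [hZeq]; have := not_lt.mp c3; linarith
      rw [(hu (a+k)).2.2 (by rw [hya]; exact ⟨not_lt.mp c3, hY.2⟩),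
          (hu (b+k)).2.2 (by rw [hyb]; exact ⟨c6, hZ.2⟩)]

/-- the factor complexity of any word coding an exchange of three
intervals satisfies C(n) ≤ 2n + 1 for all n. -/
theorem stmt_9 (α β γ : ℝ) (hα : 0 < α) (hβ : 0 < β) (hγ : 0 < γ)
    (x : ℝ) (hx : x ∈ Set.Ico (0:ℝ) (α + β + γ))
    (u : ℕ → Fin 3)
    (hu : ∀ n : ℕ,
      ((threeIET α β γ)^[n] x ∈ Set.Ico (0:ℝ) α → u n = 0) ∧
      ((threeIET α β γ)^[n] x ∈ Set.Ico α (α + β) → u n = 1) ∧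
      ((threeIET α β γ)^[n] x ∈ Set.Ico (α + β) (α + β + γ) → u n = 2)) :
    ∀ n : ℕ,
      Nat.card {w : Fin n → Fin 3 | ∃ i : ℕ, ∀ k : Fin n, w k = u (i + k)}
        ≤ 2 * n + 1 := by
  classical
  intro n
  set Dset : Set ℝ := {t : ℝ | t ∈ Set.Ico (0:ℝ) (α+β+γ) ∧
      ∃ j, j < n ∧ ((threeIET α β γ)^[j] t = α ∨ (threeIET α β γ)^[j] t = α + β)}
    with hDdef
  -- Dset is finite
  have hDfin : Dset.Finite := by
    have hsub : Dset ⊆ ⋃ j ∈ Finset.range n,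
        ({t : ℝ | t ∈ Set.Ico (0:ℝ) (α+β+γ) ∧ (threeIET α β γ)^[j] t = α} ∪
         {t : ℝ | t ∈ Set.Ico (0:ℝ) (α+β+γ) ∧ (threeIET α β γ)^[j] t = α + β}) := by
      rintro t ⟨htI, j, hj, h | h⟩ <;>
        (simp only [Set.mem_iUnion]; exact ⟨j, Finset.mem_range.mpr hj, by
          first
          | exact Or.inl ⟨htI, h⟩
          | exact Or.inr ⟨htI, h⟩⟩)
    refine Set.Finite.subset ?_ hsub
    refine Set.Finite.biUnion (Finset.range n).finite_toSet (fun j _ => ?_)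
    refine Set.Finite.union ?_ ?_ <;>
    · apply Set.Subsingleton.finite
      rintro t1 ⟨h1I, h1⟩ t2 ⟨h2I, h2⟩
      exact iterInjOn hα hβ hγ j h1I h2I (h1.trans h2.symm)
  haveI : Finite ↑Dset := hDfin.to_subtype
  -- injection from Dset into Fin n × Fin 2
  have hg : ∃ g : ↑Dset → Fin n × Fin 2, Function.Injective g := by
    refine ⟨fun d => (⟨Nat.find d.2.2, (Nat.find_spec d.2.2).1⟩,
      if (threeIET α β γ)^[Nat.find d.2.2] d.1 = α then 0 else 1), ?_⟩
    intro d1 d2 h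
    simp only [Prod.mk.injEq, Fin.mk.injEq] at h
    obtain ⟨hj, hb⟩ := h
    have hs1 := (Nat.find_spec d1.2.2).2
    have hs2 := (Nat.find_spec d2.2.2).2
    rw [hj] at hs1 hb
    set j := Nat.find d2.2.2 with hjdef
    have hne : α ≠ α + β := by linarith
    have heq : (threeIET α β γ)^[j] d1.1 = (threeIET α β γ)^[j] d2.1 := by
      rcases hs1 with h1 | h1 <;> rcases hs2 with h2 | h2
      · rw [h1, h2]
      · rw [h1, if_pos rfl] at hb
        rw [h2, if_neg (fun hc => hne hc.symm)] at hb
        exact absurd hb (by decide)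
      · rw [h2, if_pos rfl] at hb
        rw [h1, if_neg (fun hc => hne hc.symm)] at hb
        exact absurd hb (by decide)
      · rw [h1, h2]
    exact Subtype.ext (iterInjOn hα hβ hγ j d1.2.1 d2.2.1 heq)
  obtain ⟨g, hginj⟩ := hg
  set S := {w : Fin n → Fin 3 | ∃ i : ℕ, ∀ k : Fin n, w k = u (i + k)} with hSdef
  -- the "last discontinuity preimage before the orbit point" map
  have hmax : ∀ w : ↑S, ∃ o : Option ↑Dset,
      (o = none → ∀ t ∈ Dset, ¬ t ≤ (threeIET α β γ)^[Classical.choose w.2] x) ∧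
      (∀ d : ↑Dset, o = some d →
        d.1 ≤ (threeIET α β γ)^[Classical.choose w.2] x ∧
        ∀ t ∈ Dset, t ≤ (threeIET α β γ)^[Classical.choose w.2] x → t ≤ d.1) := by
    intro w
    set y := (threeIET α β γ)^[Classical.choose w.2] x with hy
    by_cases h : (Dset ∩ Set.Iic y).Nonempty
    · have hEfin : (Dset ∩ Set.Iic y).Finite := hDfin.inter_of_left _
      have hne : hEfin.toFinset.Nonempty := by
        rwa [Set.Finite.toFinset_nonempty]
      obtain ⟨d, hd, hdmax⟩ := hEfin.toFinset.exists_max_image id hne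
      rw [Set.Finite.mem_toFinset] at hd
      refine ⟨some ⟨d, hd.1⟩, fun hc => by simp at hc, ?_⟩
      rintro d' hd'
      have : d = d'.1 := by
        injection hd' with hd''
        exact congrArg Subtype.val hd''
      subst this
      refine ⟨hd.2, fun t ht htle => ?_⟩
      have := hdmax t (by rw [Set.Finite.mem_toFinset]; exact ⟨ht, htle⟩)
      simpa using this
    · refine ⟨none, fun _ t ht hle => h ⟨t, ht, hle⟩, fun d hd => by simp at hd⟩
  choose f hf1 hf2 using hmax
  -- f is injective
  have claim : ∀ w1 w2 : ↑S, f w1 = f w2 →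
      (threeIET α β γ)^[Classical.choose w1.2] x ≤
        (threeIET α β γ)^[Classical.choose w2.2] x → w1 = w2 := by
    intro w1 w2 heq hab
    have hgap : ∀ t, 0 ≤ t → t < α+β+γ →
        (∃ j, j < n ∧ ((threeIET α β γ)^[j] t = α ∨ (threeIET α β γ)^[j] t = α + β)) →
        ¬((threeIET α β γ)^[Classical.choose w1.2] x < t ∧
          t ≤ (threeIET α β γ)^[Classical.choose w2.2] x) := by
      rintro t ht0 htL hex ⟨hlt, hle⟩
      have htD : t ∈ Dset := ⟨⟨ht0, htL⟩, hex⟩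
      cases hfo : f w2 with
      | none => exact hf1 w2 hfo t htD hle
      | some d =>
        have h1 := hf2 w1 d (heq.trans hfo)
        have h2 := hf2 w2 d hfo
        have : t ≤ d.1 := h2.2 t htD hle
        have : t ≤ (threeIET α β γ)^[Classical.choose w1.2] x := le_trans this h1.1
        linarith
    have hueq := uEq hα hβ hγ x hx u hu n _ _ hab hgap
    have hi1 := Classical.choose_spec w1.2
    have hi2 := Classical.choose_spec w2.2
    refine Subtype.ext (funext fun k => ?_)
    rw [hi1 k, hi2 k, hueq k k.2]
  have hfinj : Function.Injective f := by
    intro w1 w2 heq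
    rcases le_total ((threeIET α β γ)^[Classical.choose w1.2] x)
      ((threeIET α β γ)^[Classical.choose w2.2] x) with h | h
    · exact claim w1 w2 heq h
    · exact (claim w2 w1 heq.symm h).symm
  -- counting
  calc Nat.card ↑S ≤ Nat.card (Option (Fin n × Fin 2)) :=
        Nat.card_le_card_of_injective _ ((Option.map_injective hginj).comp hfinj)
    _ = 2 * n + 1 := by
        rw [Nat.card_eq_fintype_card, Fintype.card_option, Fintype.card_prod,
          Fintype.card_fin, Fintype.card_fin]
        omega
end

section
/- If an infinite word u over an alphabet is a fixed point of a primitive substitution φ with incidence matrix M, then the vector of letter densities of u is a left eigenvector of M associated to the Perron–Frobenius (dominant) eigenvalue Λ of M. -/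
set_option linter.unusedSectionVars false

/-- Incidence matrix of a substitution: `M i j = |φ(a_i)|_{a_j}`. -/
def incMatrix {k : ℕ} (φ : Fin k → List (Fin k)) : Matrix (Fin k) (Fin k) ℕ :=
  fun i j => (φ i).count j

/-- Number of occurrences of `a` in the prefix of length `n`. -/
def letterCount {A : Type*} [DecidableEq A] (u : ℕ → A) (a : A) (n : ℕ) : ℕ :=
  ((Finset.range n).filter fun m => u m = a).card
open Finset

namespace S12
variable {k : ℕ}

/-- row sum of M^m -/
def rsum (M : Matrix (Fin k) (Fin k) ℕ) (m : ℕ) (a : Fin k) : ℕ := ∑ j, (M ^ m) a j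

/-- normalized frequency matrix -/
noncomputable def Fm (M : Matrix (Fin k) (Fin k) ℕ) (m : ℕ) (a j : Fin k) : ℝ :=
  ((M ^ m) a j : ℝ) / (rsum M m a : ℝ)

lemma rsum_zero (M : Matrix (Fin k) (Fin k) ℕ) (a : Fin k) : rsum M 0 a = 1 := by
  simp [rsum, Matrix.one_apply]

lemma rsum_add (M : Matrix (Fin k) (Fin k) ℕ) (t m : ℕ) (a : Fin k) :
    rsum M (t + m) a = ∑ p, (M ^ t) a p * rsum M m p := by
  simp only [rsum, pow_add, Matrix.mul_apply, Finset.mul_sum]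
  exact Finset.sum_comm

lemma rsum_pos (M : Matrix (Fin k) (Fin k) ℕ) (hrow : ∀ a, 0 < ∑ j, M a j)
    (m : ℕ) (a : Fin k) : 0 < rsum M m a := by
  induction m generalizing a with
  | zero => simp [rsum_zero]
  | succ m ih =>
      have h : rsum M (1 + m) a = ∑ p, M a p * rsum M m p := by
        have := rsum_add M 1 m a; simpa [pow_one] using this
      rw [Nat.add_comm m 1, h]
      obtain ⟨p, -, hp⟩ : ∃ p ∈ Finset.univ, 0 < M a p := by
        by_contra hcon
        push_neg at hcon
        have h0 : ∑ j, M a j = 0 := Finset.sum_eq_zero (fun j hj => Nat.le_zero.mp (hcon j hj))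
        have := hrow a; omega
      exact Finset.sum_pos' (fun i _ => Nat.zero_le _)
        ⟨p, Finset.mem_univ p, Nat.mul_pos hp (ih p)⟩

end S12

namespace S12
variable {k : ℕ}

section
variable (M : Matrix (Fin k) (Fin k) ℕ)
variable (hrow : ∀ a, 0 < ∑ j, M a j)
include hrow

lemma rsum_cast_pos (m : ℕ) (a : Fin k) : (0:ℝ) < (rsum M m a : ℝ) := by
  exact_mod_cast rsum_pos M hrow m a

lemma Fm_nonneg (m : ℕ) (a j : Fin k) : 0 ≤ Fm M m a j :=
  div_nonneg (by positivity) (by positivity)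

lemma Fm_sum (m : ℕ) (a : Fin k) : ∑ j, Fm M m a j = 1 := by
  have h := rsum_cast_pos M hrow m a
  unfold Fm
  rw [← Finset.sum_div]
  rw [div_eq_one_iff_eq (ne_of_gt h)]
  exact_mod_cast rfl

lemma Fm_le_one (m : ℕ) (a j : Fin k) : Fm M m a j ≤ 1 := by
  have := Fm_sum M hrow m a
  have h1 : Fm M m a j ≤ ∑ j', Fm M m a j' :=
    Finset.single_le_sum (f := fun j' => Fm M m a j') (fun i _ => Fm_nonneg M hrow m a i)
      (Finset.mem_univ j)
  linarith

/-- weights of the convex combination -/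
noncomputable def W (t m : ℕ) (a p : Fin k) : ℝ :=
  ((M ^ t) a p * rsum M m p : ℝ) / (rsum M (t + m) a : ℝ)

lemma W_nonneg (t m : ℕ) (a p : Fin k) : 0 ≤ W M t m a p := by
  apply div_nonneg <;> positivity

lemma W_sum (t m : ℕ) (a : Fin k) : ∑ p, W M t m a p = 1 := by
  unfold W
  rw [← Finset.sum_div, div_eq_one_iff_eq (ne_of_gt (rsum_cast_pos M hrow (t+m) a))]
  rw [rsum_add M t m a]
  push_cast
  rfl

lemma Fm_convex (t m : ℕ) (a j : Fin k) :
    Fm M (t + m) a j = ∑ p, W M t m a p * Fm M m p j := by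
  unfold Fm W
  have key : ((M ^ (t + m)) a j : ℝ) = ∑ p, ((M ^ t) a p : ℝ) * ((M ^ m) p j : ℝ) := by
    rw [pow_add, Matrix.mul_apply]; push_cast; rfl
  rw [key, Finset.sum_div]
  apply Finset.sum_congr rfl
  intro p _
  have hp := rsum_cast_pos M hrow m p
  rw [div_mul_div_comm, mul_right_comm]
  rw [mul_div_mul_right _ _ (ne_of_gt hp)]

end
end S12

namespace S12
variable {k : ℕ}

def nU (hk : 0 < k) : (Finset.univ : Finset (Fin k)).Nonempty := ⟨⟨0, hk⟩, mem_univ _⟩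

noncomputable def gx (hk : 0 < k) (M : Matrix (Fin k) (Fin k) ℕ) (m : ℕ) (j : Fin k) : ℝ :=
  Finset.univ.sup' (nU hk) (fun a => Fm M m a j)

noncomputable def gn (hk : 0 < k) (M : Matrix (Fin k) (Fin k) ℕ) (m : ℕ) (j : Fin k) : ℝ :=
  Finset.univ.inf' (nU hk) (fun a => Fm M m a j)

section
variable (hk : 0 < k) (M : Matrix (Fin k) (Fin k) ℕ)

lemma gn_le_F (m : ℕ) (a j : Fin k) : gn hk M m j ≤ Fm M m a j := by
  unfold gn; exact Finset.inf'_le (fun a => Fm M m a j) (mem_univ a)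

lemma F_le_gx (m : ℕ) (a j : Fin k) : Fm M m a j ≤ gx hk M m j := by
  unfold gx; exact Finset.le_sup' (fun a => Fm M m a j) (mem_univ a)

lemma gn_le_gx (m : ℕ) (j : Fin k) : gn hk M m j ≤ gx hk M m j :=
  le_trans (gn_le_F hk M m ⟨0, hk⟩ j) (F_le_gx hk M m ⟨0, hk⟩ j)

variable (hrow : ∀ a, 0 < ∑ j, M a j)
include hrow

lemma gn_nonneg (m : ℕ) (j : Fin k) : 0 ≤ gn hk M m j :=
  Finset.le_inf' _ _ (fun a _ => Fm_nonneg M hrow m a j)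

lemma gx_le_one (m : ℕ) (j : Fin k) : gx hk M m j ≤ 1 :=
  Finset.sup'_le _ _ (fun a _ => Fm_le_one M hrow m a j)

lemma F_le_gx_shift (t m : ℕ) (a j : Fin k) : Fm M (t + m) a j ≤ gx hk M m j := by
  rw [Fm_convex M hrow t m a j]
  calc ∑ p, W M t m a p * Fm M m p j
      ≤ ∑ p, W M t m a p * gx hk M m j :=
        Finset.sum_le_sum (fun p _ => mul_le_mul_of_nonneg_left (F_le_gx hk M m p j)
          (W_nonneg M hrow t m a p))
    _ = gx hk M m j := by rw [← Finset.sum_mul, W_sum M hrow t m a, one_mul]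

lemma gn_shift_le_F (t m : ℕ) (a j : Fin k) : gn hk M m j ≤ Fm M (t + m) a j := by
  rw [Fm_convex M hrow t m a j]
  calc gn hk M m j = ∑ p, W M t m a p * gn hk M m j := by
        rw [← Finset.sum_mul, W_sum M hrow t m a, one_mul]
    _ ≤ ∑ p, W M t m a p * Fm M m p j :=
        Finset.sum_le_sum (fun p _ => mul_le_mul_of_nonneg_left (gn_le_F hk M m p j)
          (W_nonneg M hrow t m a p))

lemma gx_anti (t m : ℕ) (j : Fin k) : gx hk M (t + m) j ≤ gx hk M m j :=
  Finset.sup'_le _ _ (fun a _ => F_le_gx_shift hk M hrow t m a j)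

lemma gn_mono (t m : ℕ) (j : Fin k) : gn hk M m j ≤ gn hk M (t + m) j :=
  Finset.le_inf' _ _ (fun a _ => gn_shift_le_F hk M hrow t m a j)

end
end S12

namespace S12
variable {k : ℕ}

section
variable (hk : 0 < k) (M : Matrix (Fin k) (Fin k) ℕ) (hrow : ∀ a, 0 < ∑ j, M a j)
variable (m₀ : ℕ) (C : ℕ)
variable (hp : ∀ i j, 0 < (M ^ m₀) i j)
variable (hC1 : ∀ i j, (M ^ m₀) i j ≤ C) (hC2 : ∀ j, ∑ i, (M ^ m₀) i j ≤ C)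

section
include hk hrow hp hC1 hC2

lemma W_lower (m' : ℕ) (a p : Fin k) :
    (1:ℝ) / (C:ℝ)^2 ≤ W M m₀ (m₀ + m') a p := by
  set σ : ℕ := ∑ q, rsum M m' q with hσ
  have hσpos : 0 < σ := Finset.sum_pos (fun q _ => rsum_pos M hrow m' q) (nU hk)
  have h1 : σ ≤ (M ^ m₀) a p * rsum M (m₀ + m') p := by
    have : σ ≤ rsum M (m₀ + m') p := by
      rw [rsum_add]
      exact Finset.sum_le_sum (fun q _ => Nat.le_mul_of_pos_left _ (hp p q))
    calc σ ≤ rsum M (m₀ + m') p := this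
      _ ≤ (M ^ m₀) a p * rsum M (m₀ + m') p := Nat.le_mul_of_pos_left _ (hp a p)
  have h2 : rsum M (m₀ + (m₀ + m')) a ≤ C * C * σ := by
    have hb : ∑ q, rsum M (m₀ + m') q ≤ C * σ := by
      have : ∑ q, rsum M (m₀ + m') q = ∑ q', (∑ q, (M ^ m₀) q q') * rsum M m' q' := by
        simp only [rsum_add, Finset.sum_mul]
        exact Finset.sum_comm
      rw [this, hσ, Finset.mul_sum]
      exact Finset.sum_le_sum (fun q' _ => Nat.mul_le_mul_right _ (hC2 q'))
    calc rsum M (m₀ + (m₀ + m')) a = ∑ q, (M ^ m₀) a q * rsum M (m₀ + m') q := rsum_add ..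
      _ ≤ ∑ q, C * rsum M (m₀ + m') q :=
          Finset.sum_le_sum (fun q _ => Nat.mul_le_mul_right _ (hC1 a q))
      _ = C * ∑ q, rsum M (m₀ + m') q := by rw [Finset.mul_sum]
      _ ≤ C * (C * σ) := Nat.mul_le_mul_left _ hb
      _ = C * C * σ := by ring
  have hCpos : 0 < C := lt_of_lt_of_le (hp ⟨0,hk⟩ ⟨0,hk⟩) (hC1 _ _)
  have hden : (0:ℝ) < (rsum M (m₀ + (m₀ + m')) a : ℝ) := rsum_cast_pos M hrow _ _
  rw [W, div_le_div_iff₀ (by positivity) hden]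
  have h1' : (σ:ℝ) ≤ ((M ^ m₀) a p * rsum M (m₀ + m') p : ℕ) := by exact_mod_cast h1
  have h2' : ((rsum M (m₀ + (m₀ + m')) a : ℕ) : ℝ) ≤ (C:ℝ) * C * σ := by exact_mod_cast h2
  have hσ' : (0:ℝ) < (σ:ℝ) := by exact_mod_cast hσpos
  push_cast at h1' h2' ⊢
  nlinarith [h1', h2', hσ']

lemma contraction (m' : ℕ) (j : Fin k) :
    gx hk M (m₀ + (m₀ + m')) j - gn hk M (m₀ + (m₀ + m')) j ≤
      (1 - 1/(C:ℝ)^2) * (gx hk M (m₀ + m') j - gn hk M (m₀ + m') j) := by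
  set m := m₀ + m' with hm
  set δ : ℝ := 1/(C:ℝ)^2 with hδ
  obtain ⟨ps, -, hps⟩ := Finset.exists_mem_eq_inf' (nU hk) (fun a => Fm M m a j)
  have key : ∀ a, Fm M (m₀ + m) a j ≤ gx hk M m j - δ * (gx hk M m j - gn hk M m j) := by
    intro a
    rw [Fm_convex M hrow m₀ m a j]
    have split : ∑ p, W M m₀ m a p * Fm M m p j =
        W M m₀ m a ps * Fm M m ps j + ∑ p ∈ Finset.univ.erase ps, W M m₀ m a p * Fm M m p j :=
      (Finset.add_sum_erase _ (fun p => W M m₀ m a p * Fm M m p j) (mem_univ ps)).symm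
    have hW1 : ∑ p ∈ Finset.univ.erase ps, W M m₀ m a p = 1 - W M m₀ m a ps := by
      have := Finset.add_sum_erase Finset.univ (W M m₀ m a) (mem_univ ps)
      rw [W_sum M hrow m₀ m a] at this
      linarith
    have hb : ∑ p ∈ Finset.univ.erase ps, W M m₀ m a p * Fm M m p j ≤
        (1 - W M m₀ m a ps) * gx hk M m j := by
      rw [← hW1, Finset.sum_mul]
      exact Finset.sum_le_sum (fun p _ => mul_le_mul_of_nonneg_left (F_le_gx hk M m p j)
        (W_nonneg M hrow m₀ m a p))
    have hWδ : δ ≤ W M m₀ m a ps := W_lower hk M hrow m₀ C hp hC1 hC2 m' a ps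
    have hle : gn hk M m j ≤ gx hk M m j := gn_le_gx hk M m j
    have hW1' : W M m₀ m a ps ≤ 1 := by
      have h0 : 0 ≤ ∑ p ∈ Finset.univ.erase ps, W M m₀ m a p :=
        Finset.sum_nonneg (fun p _ => W_nonneg M hrow m₀ m a p)
      linarith [hW1]
    calc ∑ p, W M m₀ m a p * Fm M m p j
        ≤ W M m₀ m a ps * gn hk M m j + (1 - W M m₀ m a ps) * gx hk M m j := by
          rw [split, ← hps]
          exact add_le_add (le_refl _) hb
      _ ≤ gx hk M m j - δ * (gx hk M m j - gn hk M m j) := by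
          nlinarith [mul_le_mul_of_nonneg_right hWδ (sub_nonneg.2 hle)]
  have h1 : gx hk M (m₀ + m) j ≤ gx hk M m j - δ * (gx hk M m j - gn hk M m j) :=
    Finset.sup'_le _ _ (fun a _ => key a)
  have h2 : gn hk M m j ≤ gn hk M (m₀ + m) j := gn_mono hk M hrow m₀ m j
  linarith

end
end
end S12

namespace S12
variable {k : ℕ}

lemma eq_zero_of_forall_abs_le {x c : ℝ} (hc : 0 < c) (h : ∀ ε : ℝ, 0 < ε → |x| ≤ ε * c) :
    x = 0 := by
  by_contra hx
  have h0 : 0 < |x| := abs_pos.mpr hx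
  have := h (|x| / (2 * c)) (by positivity)
  rw [div_mul_eq_mul_div, mul_comm] at this
  have : |x| ≤ |x| / 2 := by
    calc |x| ≤ c * |x| / (2 * c) := this
      _ = |x| / 2 := by field_simp
  linarith

noncomputable def rho (hk : 0 < k) (M : Matrix (Fin k) (Fin k) ℕ) (j : Fin k) : ℝ :=
  ⨅ m : ℕ, gx hk M m j

section
variable (hk : 0 < k) (M : Matrix (Fin k) (Fin k) ℕ) (hrow : ∀ a, 0 < ∑ j, M a j)
include hk hrow

lemma gx_bddBelow (j : Fin k) : BddBelow (Set.range fun m => gx hk M m j) := by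
  refine ⟨0, ?_⟩
  rintro x ⟨m, rfl⟩
  exact le_trans (gn_nonneg hk M hrow m j) (gn_le_gx hk M m j)

lemma rho_le_gx (m : ℕ) (j : Fin k) : rho hk M j ≤ gx hk M m j :=
  ciInf_le (gx_bddBelow hk M hrow j) m

lemma gn_le_rho (m : ℕ) (j : Fin k) : gn hk M m j ≤ rho hk M j := by
  apply le_ciInf
  intro m'
  calc gn hk M m j ≤ gn hk M (m' + m) j := gn_mono hk M hrow m' m j
    _ ≤ gx hk M (m' + m) j := gn_le_gx hk M _ j
    _ = gx hk M (m + m') j := by rw [Nat.add_comm]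
    _ ≤ gx hk M m' j := gx_anti hk M hrow m m' j

end

theorem partA (hk : 0 < k) (M : Matrix (Fin k) (Fin k) ℕ)
    (hrow : ∀ a, 0 < ∑ j, M a j) (hprim : ∃ m₁, ∀ i j, 0 < (M ^ m₁) i j) :
    (∀ j, 0 < rho hk M j) ∧ (∑ j, rho hk M j = 1) ∧
      (∀ j, ∑ a, rho hk M a * (M a j : ℝ) =
        (∑ p, rho hk M p * (rsum M 1 p : ℝ)) * rho hk M j) ∧
      (∀ ε : ℝ, 0 < ε → ∃ m, ∀ t a j, |Fm M (t + m) a j - rho hk M j| ≤ ε) := by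
  obtain ⟨m₀, hp⟩ := hprim
  set C : ℕ := ∑ i, ∑ j', (M ^ m₀) i j' with hCdef
  have hC1 : ∀ i j, (M ^ m₀) i j ≤ C := by
    intro i j
    calc (M ^ m₀) i j ≤ ∑ j', (M ^ m₀) i j' :=
          Finset.single_le_sum (fun j' _ => Nat.zero_le _) (mem_univ j)
      _ ≤ C := Finset.single_le_sum (f := fun i => ∑ j', (M ^ m₀) i j')
          (fun i _ => Nat.zero_le _) (mem_univ i)
  have hC2 : ∀ j, ∑ i, (M ^ m₀) i j ≤ C := by
    intro j
    rw [hCdef]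
    exact Finset.sum_le_sum (fun i _ =>
      Finset.single_le_sum (fun j' _ => Nat.zero_le _) (mem_univ j))
  have hCpos : 0 < C := lt_of_lt_of_le (hp ⟨0,hk⟩ ⟨0,hk⟩) (hC1 _ _)
  have hC1R : (1:ℝ) ≤ (C:ℝ) := by exact_mod_cast hCpos
  set δ : ℝ := 1/(C:ℝ)^2 with hδdef
  have hδpos : 0 < δ := by positivity
  have hδ1 : δ ≤ 1 := by
    rw [hδdef, div_le_one (by positivity)]
    nlinarith
  -- oscillation bound
  have osc_pow : ∀ t (j : Fin k), gx hk M ((t+1)*m₀) j - gn hk M ((t+1)*m₀) j ≤ (1-δ)^t := by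
    intro t j
    induction t with
    | zero =>
        simp only [pow_zero, Nat.zero_add, one_mul]
        linarith [gx_le_one hk M hrow m₀ j, gn_nonneg hk M hrow m₀ j]
    | succ t ih =>
        have e1 : (t+1+1)*m₀ = m₀ + (m₀ + t*m₀) := by ring
        have e2 : (t+1)*m₀ = m₀ + t*m₀ := by ring
        rw [e1]
        calc gx hk M (m₀ + (m₀ + t*m₀)) j - gn hk M (m₀ + (m₀ + t*m₀)) j
            ≤ (1-δ) * (gx hk M (m₀ + t*m₀) j - gn hk M (m₀ + t*m₀) j) :=
              contraction hk M hrow m₀ C hp hC1 hC2 (t*m₀) j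
          _ ≤ (1-δ) * (1-δ)^t := by
              rw [← e2]
              exact mul_le_mul_of_nonneg_left ih (by linarith)
          _ = (1-δ)^(t+1) := by ring
  -- convergence
  have conv : ∀ ε : ℝ, 0 < ε → ∃ m, ∀ t a j, |Fm M (t + m) a j - rho hk M j| ≤ ε := by
    intro ε hε
    obtain ⟨t₀, ht₀⟩ := exists_pow_lt_of_lt_one hε (show 1 - δ < 1 by linarith)
    refine ⟨(t₀+1)*m₀, fun t a j => ?_⟩
    set m := (t₀+1)*m₀ with hmdef
    have h1 : Fm M (t + m) a j ≤ gx hk M m j := F_le_gx_shift hk M hrow t m a j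
    have h2 : gn hk M m j ≤ Fm M (t + m) a j := gn_shift_le_F hk M hrow t m a j
    have h3 : rho hk M j ≤ gx hk M m j := rho_le_gx hk M hrow m j
    have h4 : gn hk M m j ≤ rho hk M j := gn_le_rho hk M hrow m j
    have h5 : gx hk M m j - gn hk M m j ≤ (1-δ)^t₀ := osc_pow t₀ j
    rw [abs_le]
    constructor <;> linarith
  have rho_nonneg : ∀ j, 0 ≤ rho hk M j := fun j =>
    le_trans (gn_nonneg hk M hrow 0 j) (gn_le_rho hk M hrow 0 j)
  -- positivity
  have rho_pos : ∀ j, 0 < rho hk M j := by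
    intro j
    have h1 : 0 < gn hk M m₀ j := by
      rw [gn, Finset.lt_inf'_iff]
      intro a _
      apply div_pos
      · exact_mod_cast hp a j
      · exact rsum_cast_pos M hrow m₀ a
    exact lt_of_lt_of_le h1 (gn_le_rho hk M hrow m₀ j)
  -- sum = 1
  have rho_sum : ∑ j, rho hk M j = 1 := by
    have key : ∀ ε : ℝ, 0 < ε → |(∑ j, rho hk M j) - 1| ≤ ε * k := by
      intro ε hε
      obtain ⟨m, hm⟩ := conv ε hε
      have h1 : ∑ j, Fm M (0 + m) ⟨0,hk⟩ j = 1 := Fm_sum M hrow _ _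
      calc |(∑ j, rho hk M j) - 1|
          = |∑ j, (rho hk M j - Fm M (0 + m) ⟨0,hk⟩ j)| := by
            rw [Finset.sum_sub_distrib, h1]
        _ ≤ ∑ j : Fin k, |rho hk M j - Fm M (0 + m) ⟨0,hk⟩ j| := Finset.abs_sum_le_sum_abs _ _
        _ ≤ ∑ j : Fin k, ε := Finset.sum_le_sum (fun j _ => by
            rw [abs_sub_comm]; exact hm 0 ⟨0,hk⟩ j)
        _ = ε * k := by simp [Finset.sum_const, mul_comm]
    have hkR : (0:ℝ) < (k:ℝ) := by exact_mod_cast hk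
    have := eq_zero_of_forall_abs_le hkR (fun ε hε => key ε hε)
    linarith [this]
  -- eigen equation
  have rho_le_one : ∀ j, rho hk M j ≤ 1 := by
    intro j
    have h := Finset.single_le_sum (f := fun j => rho hk M j) (fun i _ => rho_nonneg i)
      (mem_univ j)
    rw [rho_sum] at h
    exact h
  have eigen : ∀ j, ∑ a, rho hk M a * (M a j : ℝ) =
      (∑ p, rho hk M p * (rsum M 1 p : ℝ)) * rho hk M j := by
    intro j
    set Λ : ℝ := ∑ p, rho hk M p * (rsum M 1 p : ℝ) with hΛdef
    set C₁ : ℝ := ∑ p, (rsum M 1 p : ℝ) with hC₁def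
    have hC₁pos : 0 < C₁ := Finset.sum_pos (fun p _ => rsum_cast_pos M hrow 1 p) (nU hk)
    have key : ∀ ε : ℝ, 0 < ε →
        |(∑ a, rho hk M a * (M a j : ℝ)) - Λ * rho hk M j| ≤ ε * (3 * C₁) := by
      intro ε hε
      obtain ⟨m, hm⟩ := conv ε hε
      set a₀ : Fin k := ⟨0, hk⟩
      have hFa : ∀ p, |Fm M m a₀ p - rho hk M p| ≤ ε := by
        intro p; have := hm 0 a₀ p; rwa [Nat.zero_add] at this
      have hF' : |Fm M (m+1) a₀ j - rho hk M j| ≤ ε := by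
        have := hm 1 a₀ j; rwa [Nat.add_comm 1 m] at this
      have hrm : (0:ℝ) < (rsum M m a₀ : ℝ) := rsum_cast_pos M hrow m a₀
      have hrm1 : (0:ℝ) < (rsum M (m+1) a₀ : ℝ) := rsum_cast_pos M hrow (m+1) a₀
      set q : ℝ := (rsum M (m+1) a₀ : ℝ) / (rsum M m a₀ : ℝ) with hqdef
      have I1 : Fm M (m+1) a₀ j * q = ∑ p, Fm M m a₀ p * (M p j : ℝ) := by
        have hmm : ((M ^ (m+1)) a₀ j : ℝ) = ∑ p, ((M ^ m) a₀ p : ℝ) * (M p j : ℝ) := by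
          rw [pow_succ, Matrix.mul_apply]; push_cast; rfl
        unfold Fm
        rw [hqdef, div_mul_div_comm, mul_comm ((rsum M (m+1) a₀ : ℝ)),
          mul_div_mul_right _ _ (ne_of_gt hrm1)]
        rw [hmm, Finset.sum_div]
        apply Finset.sum_congr rfl
        intro p _
        rw [div_mul_eq_mul_div]
      have I2 : q = ∑ p, Fm M m a₀ p * (rsum M 1 p : ℝ) := by
        have hr : (rsum M (m+1) a₀ : ℝ) = ∑ p, ((M ^ m) a₀ p : ℝ) * (rsum M 1 p : ℝ) := by
          have := rsum_add M m 1 a₀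
          rw [this]; push_cast; rfl
        rw [hqdef, hr, Finset.sum_div]
        apply Finset.sum_congr rfl
        intro p _
        rw [Fm, div_mul_eq_mul_div]
      have E1 : |(∑ a, rho hk M a * (M a j : ℝ)) - ∑ p, Fm M m a₀ p * (M p j : ℝ)| ≤ ε * C₁ := by
        rw [← Finset.sum_sub_distrib]
        calc |∑ a, (rho hk M a * (M a j : ℝ) - Fm M m a₀ a * (M a j : ℝ))|
            ≤ ∑ a : Fin k, |rho hk M a * (M a j : ℝ) - Fm M m a₀ a * (M a j : ℝ)| :=
              Finset.abs_sum_le_sum_abs _ _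
          _ ≤ ∑ a : Fin k, ε * (rsum M 1 a : ℝ) := by
              apply Finset.sum_le_sum
              intro a _
              rw [← sub_mul, abs_mul, abs_of_nonneg (by positivity : (0:ℝ) ≤ (M a j : ℝ))]
              have h1 : |rho hk M a - Fm M m a₀ a| ≤ ε := by
                rw [abs_sub_comm]; exact hFa a
              have h2 : (M a j : ℝ) ≤ (rsum M 1 a : ℝ) := by
                have : M a j ≤ rsum M 1 a := by
                  rw [rsum]
                  calc M a j = (M ^ 1) a j := by rw [pow_one]
                    _ ≤ ∑ j', (M ^ 1) a j' :=
                      Finset.single_le_sum (fun j' _ => Nat.zero_le _) (mem_univ j)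
                exact_mod_cast this
              have h3 : (0:ℝ) ≤ (M a j : ℝ) := by positivity
              calc |rho hk M a - Fm M m a₀ a| * (M a j : ℝ) ≤ ε * (M a j : ℝ) :=
                    mul_le_mul_of_nonneg_right h1 h3
                _ ≤ ε * (rsum M 1 a : ℝ) := mul_le_mul_of_nonneg_left h2 (le_of_lt hε)
          _ = ε * C₁ := by rw [hC₁def, Finset.mul_sum]
      have E2 : |q - Λ| ≤ ε * C₁ := by
        rw [I2, hΛdef, ← Finset.sum_sub_distrib]
        calc |∑ p, (Fm M m a₀ p * (rsum M 1 p : ℝ) - rho hk M p * (rsum M 1 p : ℝ))|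
            ≤ ∑ p : Fin k, |Fm M m a₀ p * (rsum M 1 p : ℝ) - rho hk M p * (rsum M 1 p : ℝ)| :=
              Finset.abs_sum_le_sum_abs _ _
          _ ≤ ∑ p : Fin k, ε * (rsum M 1 p : ℝ) := by
              apply Finset.sum_le_sum
              intro p _
              rw [← sub_mul, abs_mul, abs_of_nonneg (le_of_lt (rsum_cast_pos M hrow 1 p))]
              exact mul_le_mul_of_nonneg_right (hFa p) (le_of_lt (rsum_cast_pos M hrow 1 p))
          _ = ε * C₁ := by rw [hC₁def, Finset.mul_sum]
      have E3 : 0 ≤ q := by positivity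
      have E3' : q ≤ C₁ := by
        rw [I2, hC₁def]
        apply Finset.sum_le_sum
        intro p _
        calc Fm M m a₀ p * (rsum M 1 p : ℝ) ≤ 1 * (rsum M 1 p : ℝ) :=
              mul_le_mul_of_nonneg_right (Fm_le_one M hrow m a₀ p)
                (le_of_lt (rsum_cast_pos M hrow 1 p))
          _ = (rsum M 1 p : ℝ) := one_mul _
      have E4 : |Fm M (m+1) a₀ j * q - rho hk M j * Λ| ≤ ε * C₁ + ε * C₁ := by
        have decomp : Fm M (m+1) a₀ j * q - rho hk M j * Λ =
            (Fm M (m+1) a₀ j - rho hk M j) * q + rho hk M j * (q - Λ) := by ring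
        rw [decomp]
        calc |(Fm M (m+1) a₀ j - rho hk M j) * q + rho hk M j * (q - Λ)|
            ≤ |(Fm M (m+1) a₀ j - rho hk M j) * q| + |rho hk M j * (q - Λ)| := abs_add_le _ _
          _ ≤ ε * C₁ + ε * C₁ := by
              apply add_le_add
              · rw [abs_mul, abs_of_nonneg E3]
                calc |Fm M (m+1) a₀ j - rho hk M j| * q ≤ ε * q :=
                      mul_le_mul_of_nonneg_right hF' E3
                  _ ≤ ε * C₁ := mul_le_mul_of_nonneg_left E3' (le_of_lt hε)
              · rw [abs_mul, abs_of_nonneg (rho_nonneg j)]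
                calc rho hk M j * |q - Λ| ≤ 1 * |q - Λ| :=
                      mul_le_mul_of_nonneg_right (rho_le_one j) (abs_nonneg _)
                  _ = |q - Λ| := one_mul _
                  _ ≤ ε * C₁ := E2
      calc |(∑ a, rho hk M a * (M a j : ℝ)) - Λ * rho hk M j|
          = |((∑ a, rho hk M a * (M a j : ℝ)) - ∑ p, Fm M m a₀ p * (M p j : ℝ))
              + (Fm M (m+1) a₀ j * q - rho hk M j * Λ)| := by
            rw [← I1]
            congr 1
            ring
        _ ≤ |(∑ a, rho hk M a * (M a j : ℝ)) - ∑ p, Fm M m a₀ p * (M p j : ℝ)|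
              + |Fm M (m+1) a₀ j * q - rho hk M j * Λ| := abs_add_le _ _
        _ ≤ ε * C₁ + (ε * C₁ + ε * C₁) := add_le_add E1 E4
        _ = ε * (3 * C₁) := by ring
    have := eq_zero_of_forall_abs_le (show (0:ℝ) < 3 * C₁ by linarith) key
    linarith [this]
  exact ⟨rho_pos, rho_sum, eigen, conv⟩

end S12

namespace S12
variable {k : ℕ}

lemma letterCount_eq_sum {A : Type*} [DecidableEq A] (u : ℕ → A) (a : A) (n : ℕ) :
    letterCount u a n = ∑ m ∈ Finset.range n, if u m = a then 1 else 0 := by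
  rw [letterCount, Finset.card_filter]

lemma letterCount_add {A : Type*} [DecidableEq A] (u : ℕ → A) (a : A) (n t : ℕ) :
    letterCount u a (n + t) = letterCount u a n +
      ∑ i ∈ Finset.range t, if u (n + i) = a then 1 else 0 := by
  induction t with
  | zero => simp
  | succ t ih =>
      rw [← Nat.add_assoc, letterCount_eq_sum, Finset.sum_range_succ,
        ← letterCount_eq_sum, ih, Finset.sum_range_succ]
      omega

lemma letterCount_succ {A : Type*} [DecidableEq A] (u : ℕ → A) (a : A) (n : ℕ) :
    letterCount u a (n + 1) = letterCount u a n + if u n = a then 1 else 0 := by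
  rw [letterCount_add, Finset.sum_range_one, Nat.add_zero]

lemma letterCount_mono_add {A : Type*} [DecidableEq A] (u : ℕ → A) (a : A) (n t : ℕ) :
    letterCount u a n ≤ letterCount u a (n + t) ∧
      letterCount u a (n + t) ≤ letterCount u a n + t := by
  rw [letterCount_add]
  constructor
  · exact Nat.le_add_right _ _
  · have h : ∑ i ∈ Finset.range t, (if u (n + i) = a then 1 else 0) ≤
        ∑ i ∈ Finset.range t, 1 :=
      Finset.sum_le_sum (fun i _ => by split <;> omega)
    simp only [Finset.sum_const, Finset.card_range, smul_eq_mul, mul_one] at h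
    omega

lemma sum_letterCount (hk : 0 < k) (u : ℕ → Fin k) (n : ℕ) :
    ∑ j, letterCount u j n = n := by
  simp only [letterCount_eq_sum]
  rw [Finset.sum_comm]
  have : ∀ m, ∑ j : Fin k, (if u m = j then 1 else 0) = 1 := by
    intro m
    rw [Finset.sum_ite_eq]
    simp
  simp [this]

lemma sum_ite_getD (l : List (Fin k)) (j d : Fin k) :
    ∑ t ∈ Finset.range l.length, (if l.getD t d = j then 1 else 0) = l.count j := by
  induction l with
  | nil => simp
  | cons x xs ih =>
      rw [List.length_cons, Finset.sum_range_succ']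
      simp only [List.getD_cons_succ, List.getD_cons_zero]
      rw [ih, List.count_cons]
      simp [beq_iff_eq]

lemma sum_f_getD (l : List (Fin k)) (f : Fin k → ℕ) (d : Fin k) :
    ∑ t ∈ Finset.range l.length, f (l.getD t d) = ∑ a, l.count a * f a := by
  induction l with
  | nil => simp
  | cons x xs ih =>
      rw [List.length_cons, Finset.sum_range_succ']
      simp only [List.getD_cons_succ, List.getD_cons_zero]
      rw [ih]
      have : ∀ a : Fin k, (x :: xs).count a * f a =
          xs.count a * f a + if x = a then f a else 0 := by
        intro a
        rw [List.count_cons, add_mul]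
        simp [beq_iff_eq, ite_mul]
      rw [Finset.sum_congr rfl (fun a _ => this a), Finset.sum_add_distrib,
        Finset.sum_ite_eq]
      simp

end S12

namespace S12
variable {k : ℕ}

lemma sum_count (hk : 0 < k) (l : List (Fin k)) : ∑ j, l.count j = l.length := by
  have h := sum_f_getD l (fun _ => 1) ⟨0, hk⟩
  simpa using h.symm

lemma incMatrix_row (hk : 0 < k) (φ : Fin k → List (Fin k)) (hne : ∀ i, φ i ≠ []) :
    ∀ a, 0 < ∑ j, incMatrix φ a j := by
  intro a
  have h : ∑ j, incMatrix φ a j = (φ a).length := sum_count hk (φ a)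
  rw [h]
  exact List.length_pos_iff.mpr (hne a)

section
variable (hk : 0 < k) (φ : Fin k → List (Fin k)) (u : ℕ → Fin k) (s : ℕ → ℕ)
variable (hs0 : s 0 = 0) (hstep : ∀ n, s (n + 1) = s n + (φ (u n)).length)
variable (hget : ∀ n t, (h : t < (φ (u n)).length) → u (s n + t) = (φ (u n)).get ⟨t, h⟩)

include hget in
lemma u_getD (n t : ℕ) (ht : t < (φ (u n)).length) (d : Fin k) :
    u (s n + t) = (φ (u n)).getD t d := by
  rw [List.getD_eq_getElem _ _ ht]
  exact hget n t ht

include hstep hget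

lemma count_step (N : ℕ) (j : Fin k) :
    letterCount u j (s (N + 1)) = letterCount u j (s N) + incMatrix φ (u N) j := by
  rw [hstep, letterCount_add]
  congr 1
  have d : Fin k := u 0
  calc ∑ i ∈ Finset.range (φ (u N)).length, (if u (s N + i) = j then 1 else 0)
      = ∑ i ∈ Finset.range (φ (u N)).length, (if (φ (u N)).getD i (u 0) = j then 1 else 0) := by
        apply Finset.sum_congr rfl
        intro i hi
        rw [u_getD φ u s hget N i (Finset.mem_range.mp hi) (u 0)]
    _ = (φ (u N)).count j := sum_ite_getD _ _ _
    _ = incMatrix φ (u N) j := rfl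

include hs0

lemma count_one (N : ℕ) (j : Fin k) :
    letterCount u j (s N) = ∑ a, letterCount u a N * incMatrix φ a j := by
  induction N with
  | zero => simp [hs0, letterCount]
  | succ N ih =>
      rw [count_step φ u s hstep hget N j, ih]
      have : ∀ a, letterCount u a (N+1) * incMatrix φ a j =
          letterCount u a N * incMatrix φ a j + if u N = a then incMatrix φ a j else 0 := by
        intro a
        rw [letterCount_succ, add_mul, ite_mul, one_mul, zero_mul]
      rw [Finset.sum_congr rfl (fun a _ => this a), Finset.sum_add_distrib,
        Finset.sum_ite_eq]
      simp

lemma count_iter (m N : ℕ) (j : Fin k) :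
    letterCount u j (s^[m] N) = ∑ a, letterCount u a N * ((incMatrix φ)^m) a j := by
  induction m generalizing N with
  | zero => simp [Matrix.one_apply, Finset.sum_ite_eq']
  | succ m ih =>
      rw [Function.iterate_succ_apply, ih (s N)]
      have : ∀ a, letterCount u a (s N) * ((incMatrix φ)^m) a j =
          ∑ b, letterCount u b N * incMatrix φ b a * ((incMatrix φ)^m) a j := by
        intro a
        rw [count_one φ u s hs0 hstep hget N a, Finset.sum_mul]
      rw [Finset.sum_congr rfl (fun a _ => this a), Finset.sum_comm]
      apply Finset.sum_congr rfl
      intro b _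
      rw [pow_succ', Matrix.mul_apply, Finset.mul_sum]
      apply Finset.sum_congr rfl
      intro a _
      ring

lemma iter_zero (m : ℕ) : s^[m] 0 = 0 := by
  induction m with
  | zero => rfl
  | succ m ih => rw [Function.iterate_succ_apply, hs0, ih]

lemma iter_step (m N : ℕ) :
    s^[m] (N + 1) = s^[m] N + rsum (incMatrix φ) m (u N) := by
  induction m generalizing N with
  | zero => simp [rsum_zero]
  | succ m ih =>
      have hadd : ∀ b a, s^[m] (a + b) = s^[m] a +
          ∑ i ∈ Finset.range b, rsum (incMatrix φ) m (u (a + i)) := by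
        intro b
        induction b with
        | zero => simp
        | succ b ihb =>
            intro a
            rw [← Nat.add_assoc, ih (a + b), ihb a, Finset.sum_range_succ]
            omega
      rw [Function.iterate_succ_apply, Function.iterate_succ_apply, hstep, hadd]
      congr 1
      calc ∑ i ∈ Finset.range (φ (u N)).length, rsum (incMatrix φ) m (u (s N + i))
          = ∑ i ∈ Finset.range (φ (u N)).length,
              rsum (incMatrix φ) m ((φ (u N)).getD i (u 0)) := by
            apply Finset.sum_congr rfl
            intro i hi
            rw [u_getD φ u s hget N i (Finset.mem_range.mp hi) (u 0)]
        _ = ∑ a, (φ (u N)).count a * rsum (incMatrix φ) m a := sum_f_getD _ _ _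
        _ = rsum (incMatrix φ) (m + 1) (u N) := by
            rw [Nat.add_comm m 1, rsum_add]
            apply Finset.sum_congr rfl
            intro a _
            congr 1
            rw [pow_one]
            rfl

lemma iter_le (hrow : ∀ a, 0 < ∑ j, incMatrix φ a j) (m N : ℕ) : N ≤ s^[m] N := by
  induction N with
  | zero => exact Nat.zero_le _
  | succ N ih =>
      rw [iter_step φ u s hs0 hstep hget m N]
      have := rsum_pos (incMatrix φ) hrow m (u N)
      omega

end
end S12

namespace S12
variable {k : ℕ}

section
variable (hk : 0 < k) (φ : Fin k → List (Fin k)) (u : ℕ → Fin k) (s : ℕ → ℕ)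
variable (hs0 : s 0 = 0) (hstep : ∀ n, s (n + 1) = s n + (φ (u n)).length)
variable (hget : ∀ n t, (h : t < (φ (u n)).length) → u (s n + t) = (φ (u n)).get ⟨t, h⟩)
variable (hrow : ∀ a, 0 < ∑ j, incMatrix φ a j)
include hk hs0 hstep hget hrow

lemma exists_bracket (m n : ℕ) : ∃ N, s^[m] N ≤ n ∧ n < s^[m] (N + 1) := by
  classical
  set P : ℕ → Prop := fun N => s^[m] N ≤ n with hP
  have hP0 : P 0 := by
    show s^[m] 0 ≤ n
    rw [iter_zero φ u s hs0 hstep hget m]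
    exact Nat.zero_le n
  set N := Nat.findGreatest P (n + 1) with hN
  have h1 : P N := Nat.findGreatest_spec (Nat.zero_le (n + 1)) hP0
  have h2 : ¬ P (N + 1) := by
    by_cases hcase : N + 1 ≤ n + 1
    · exact Nat.findGreatest_is_greatest (by omega) hcase
    · intro hcontra
      have := iter_le φ u s hs0 hstep hget hrow m (N + 1)
      rw [hP] at hcontra
      omega
  exact ⟨N, h1, Nat.lt_of_not_le h2⟩

theorem partB (ρ : Fin k → ℝ) (hρ0 : ∀ j, 0 ≤ ρ j) (hρ1 : ∀ j, ρ j ≤ 1)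
    (conv : ∀ ε : ℝ, 0 < ε → ∃ m, ∀ a j, |Fm (incMatrix φ) m a j - ρ j| ≤ ε)
    (j : Fin k) :
    Filter.Tendsto (fun n => (letterCount u j n : ℝ) / n) Filter.atTop (nhds (ρ j)) := by
  set M := incMatrix φ with hM
  have key : ∀ ε : ℝ, 0 < ε → ∃ D : ℝ, 0 ≤ D ∧
      ∀ n : ℕ, |(letterCount u j n : ℝ) - ρ j * n| ≤ ε * n + D := by
    intro ε hε
    obtain ⟨m, hm⟩ := conv ε hε
    set B : ℕ := ∑ a, rsum M m a with hB
    refine ⟨2 * B, by positivity, fun n => ?_⟩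
    obtain ⟨N, hN1, hN2⟩ := exists_bracket hk φ u s hs0 hstep hget (hM ▸ hrow) m n
    set S : ℕ := s^[m] N with hS
    set cS : ℕ := letterCount u j S with hcS
    set cn : ℕ := letterCount u j n with hcn
    -- ℕ facts
    have g0 : rsum M m (u N) ≤ B := by
      rw [hB]
      exact Finset.single_le_sum (f := fun a => rsum M m a) (fun a _ => Nat.zero_le _)
        (mem_univ (u N))
    have g4 : n ≤ S + B := by
      have h := iter_step φ u s hs0 hstep hget m N
      rw [← hM] at h
      omega
    have g12 := letterCount_mono_add u j S (n - S)
    rw [Nat.add_sub_cancel' hN1] at g12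
    have f3 : cS = ∑ a, letterCount u a N * (M^m) a j := count_iter φ u s hs0 hstep hget m N j
    have f4 : S = ∑ a, letterCount u a N * rsum M m a := by
      have h1 : ∑ j', letterCount u j' S = S := sum_letterCount hk u S
      have h2 : ∀ j', letterCount u j' S = ∑ a, letterCount u a N * (M^m) a j' :=
        fun j' => count_iter φ u s hs0 hstep hget m N j'
      calc S = ∑ j', letterCount u j' S := h1.symm
        _ = ∑ j', ∑ a, letterCount u a N * (M^m) a j' :=
            Finset.sum_congr rfl (fun j' _ => h2 j')
        _ = ∑ a, ∑ j', letterCount u a N * (M^m) a j' := Finset.sum_comm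
        _ = ∑ a, letterCount u a N * rsum M m a := by
            apply Finset.sum_congr rfl
            intro a _
            rw [rsum, Finset.mul_sum]
    -- real estimate on cS
    have hcSest : |(cS:ℝ) - ρ j * S| ≤ ε * S := by
      have e1 : (cS:ℝ) = ∑ a, (letterCount u a N : ℝ) * ((M^m) a j : ℝ) := by
        rw [f3]; push_cast; rfl
      have e2 : ρ j * (S:ℝ) = ∑ a, (letterCount u a N : ℝ) * (ρ j * (rsum M m a : ℝ)) := by
        rw [f4]; push_cast [Finset.mul_sum]
        apply Finset.sum_congr rfl
        intro a _
        ring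
      rw [e1, e2, ← Finset.sum_sub_distrib]
      have e3 : ∀ a, (letterCount u a N : ℝ) * ((M^m) a j : ℝ) -
          (letterCount u a N : ℝ) * (ρ j * (rsum M m a : ℝ)) =
          (letterCount u a N : ℝ) * (rsum M m a : ℝ) * (Fm M m a j - ρ j) := by
        intro a
        have hr : (0:ℝ) < (rsum M m a : ℝ) := rsum_cast_pos M hrow m a
        have : ((M^m) a j : ℝ) = Fm M m a j * (rsum M m a : ℝ) := by
          rw [Fm, div_mul_cancel₀ _ (ne_of_gt hr)]
        rw [this]; ring
      calc |∑ a, ((letterCount u a N : ℝ) * ((M^m) a j : ℝ) -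
              (letterCount u a N : ℝ) * (ρ j * (rsum M m a : ℝ)))|
          = |∑ a, (letterCount u a N : ℝ) * (rsum M m a : ℝ) * (Fm M m a j - ρ j)| := by
            rw [Finset.sum_congr rfl (fun a _ => e3 a)]
        _ ≤ ∑ a : Fin k, |(letterCount u a N : ℝ) * (rsum M m a : ℝ) * (Fm M m a j - ρ j)| :=
            Finset.abs_sum_le_sum_abs _ _
        _ ≤ ∑ a : Fin k, (letterCount u a N : ℝ) * (rsum M m a : ℝ) * ε := by
            apply Finset.sum_le_sum
            intro a _
            rw [abs_mul, abs_of_nonneg (by positivity : (0:ℝ) ≤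
              (letterCount u a N : ℝ) * (rsum M m a : ℝ))]
            exact mul_le_mul_of_nonneg_left (hm a j) (by positivity)
        _ = ε * S := by
            rw [f4]; push_cast [Finset.sum_mul, Finset.mul_sum]
            apply Finset.sum_congr rfl
            intro a _
            ring
    -- combine
    have hSn : (S:ℝ) ≤ (n:ℝ) := by exact_mod_cast hN1
    have hB0 : (0:ℝ) ≤ (B:ℝ) := by positivity
    have habs1 : |(cn:ℝ) - (cS:ℝ)| ≤ (B:ℝ) := by
      have hle : cS ≤ cn := g12.1
      have hge : cn ≤ cS + B := by omega
      have h1 : (cS:ℝ) ≤ (cn:ℝ) := by exact_mod_cast hle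
      have h2 : (cn:ℝ) ≤ (cS:ℝ) + (B:ℝ) := by exact_mod_cast hge
      rw [abs_le]
      constructor <;> linarith
    have habs2 : |ρ j * (S:ℝ) - ρ j * (n:ℝ)| ≤ (B:ℝ) := by
      have hc : (n:ℝ) ≤ (S:ℝ) + (B:ℝ) := by exact_mod_cast g4
      have h0 := hρ0 j
      have h1 := hρ1 j
      rw [abs_le]
      constructor <;> nlinarith
    calc |(cn:ℝ) - ρ j * n|
        = |((cn:ℝ) - (cS:ℝ)) + ((cS:ℝ) - ρ j * S) + (ρ j * S - ρ j * n)| := by ring_nf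
      _ ≤ |((cn:ℝ) - (cS:ℝ)) + ((cS:ℝ) - ρ j * S)| + |ρ j * S - ρ j * n| := abs_add_le _ _
      _ ≤ |(cn:ℝ) - (cS:ℝ)| + |(cS:ℝ) - ρ j * S| + |ρ j * S - ρ j * n| := by
          linarith [abs_add_le ((cn:ℝ) - (cS:ℝ)) ((cS:ℝ) - ρ j * S)]
      _ ≤ (B:ℝ) + ε * S + (B:ℝ) := by linarith [hcSest, habs1, habs2]
      _ ≤ ε * n + 2 * B := by nlinarith
  -- tendsto
  rw [Metric.tendsto_atTop]
  intro ε hε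
  obtain ⟨D, hD0, hD⟩ := key (ε/2) (by linarith)
  obtain ⟨N₀, hN₀⟩ := exists_nat_gt (2 * D / ε + 1)
  refine ⟨N₀, fun n hn => ?_⟩
  have hn1 : 1 ≤ n := by
    have : (0:ℝ) < 2 * D / ε + 1 := by positivity
    have : (0:ℝ) < (N₀:ℝ) := by linarith
    have : 0 < N₀ := by exact_mod_cast this
    omega
  have hnR : (0:ℝ) < (n:ℝ) := by exact_mod_cast hn1
  have hDn : D / n < ε / 2 := by
    rw [div_lt_iff₀ hnR]
    have hNn : (N₀:ℝ) ≤ (n:ℝ) := by exact_mod_cast hn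
    have : 2 * D / ε < (n:ℝ) := by linarith
    rw [div_lt_iff₀ hε] at this
    nlinarith
  rw [Real.dist_eq]
  have expand : (letterCount u j n : ℝ) / n - ρ j = ((letterCount u j n : ℝ) - ρ j * n) / n := by
    field_simp
  rw [expand, abs_div, abs_of_pos hnR]
  rw [div_lt_iff₀ hnR]
  calc |(letterCount u j n : ℝ) - ρ j * n| ≤ ε/2 * n + D := hD n
    _ < ε/2 * n + ε/2 * n := by
        have : D < ε/2 * n := by
          rw [div_lt_iff₀ hnR] at hDn
          linarith
        linarith
    _ = ε * n := by ring

end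
end S12

/-- if u is a fixed point of a primitive substitution φ with
incidence matrix M, then the letter-density vector of u is a left eigenvector
of M for the dominant (Perron–Frobenius) eigenvalue Λ. -/
theorem stmt_12 (k : ℕ) (hk : 0 < k) (φ : Fin k → List (Fin k))
    (hne : ∀ i, φ i ≠ [])
    (hprim : ∃ m : ℕ, ∀ i j, 0 < ((incMatrix φ) ^ m) i j)
    (u : ℕ → Fin k) (hfix : SubstImage φ u u)
    (Λ : ℝ)
    (hΛeig : ∃ y : Fin k → ℝ, y ≠ 0 ∧
      ((incMatrix φ).map (Nat.cast : ℕ → ℝ)).mulVec y = Λ • y)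
    (hΛdom : ∀ μ : ℂ, (∃ y : Fin k → ℂ, y ≠ 0 ∧
      ((incMatrix φ).map (Nat.cast : ℕ → ℂ)).mulVec y = μ • y) →
      ‖μ‖ ≤ Λ) :
    ∃ ρ : Fin k → ℝ, ρ ≠ 0 ∧
      (∀ a : Fin k, Filter.Tendsto (fun n => (letterCount u a n : ℝ) / n)
        Filter.atTop (nhds (ρ a))) ∧
      (∀ j : Fin k, ∑ i : Fin k, ρ i * ((incMatrix φ) i j : ℝ) = Λ * ρ j) := by
  classical
  set M := incMatrix φ with hM
  have hrow : ∀ a, 0 < ∑ j, M a j := S12.incMatrix_row hk φ hne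
  obtain ⟨hρpos, hρsum, heigen, hconv⟩ := S12.partA hk M hrow hprim
  set ρ : Fin k → ℝ := S12.rho hk M with hρ
  set Λ' : ℝ := ∑ p, ρ p * (S12.rsum M 1 p : ℝ) with hΛ'
  have hρ0 : ∀ j, 0 ≤ ρ j := fun j => le_of_lt (hρpos j)
  have hρ1 : ∀ j, ρ j ≤ 1 := by
    intro j
    have h := Finset.single_le_sum (f := fun j => ρ j) (fun i _ => hρ0 i) (Finset.mem_univ j)
    rw [hρsum] at h
    exact h
  have hρne : ρ ≠ 0 := by
    intro h
    have := hρpos ⟨0, hk⟩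
    rw [h] at this
    simp at this
  have hΛ'0 : 0 ≤ Λ' := Finset.sum_nonneg (fun p _ => mul_nonneg (hρ0 p) (by positivity))
  -- Λ' ≤ Λ  (Λ' is an eigenvalue of M over ℂ)
  have hle1 : Λ' ≤ Λ := by
    set Mr := M.map (Nat.cast : ℕ → ℝ) with hMr
    have hmv : (Mr.transpose - Λ' • 1).mulVec ρ = 0 := by
      funext j
      rw [Matrix.sub_mulVec]
      have h1 : (Mr.transpose.mulVec ρ) j = ∑ i, ρ i * (M i j : ℝ) := by
        rw [Matrix.mulVec, dotProduct]
        apply Finset.sum_congr rfl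
        intro i _
        rw [Matrix.transpose_apply, hMr, Matrix.map_apply, mul_comm]
      have h2 : ((Λ' • (1 : Matrix (Fin k) (Fin k) ℝ)).mulVec ρ) j = Λ' * ρ j := by
        rw [Matrix.smul_mulVec, Matrix.one_mulVec]
        rfl
      rw [Pi.sub_apply, h1, h2, heigen j, sub_self]
      rfl
    have hdetT : (Mr.transpose - Λ' • 1).det = 0 :=
      Matrix.exists_mulVec_eq_zero_iff.mp ⟨ρ, hρne, hmv⟩
    have hdet : (Mr - Λ' • 1).det = 0 := by
      have : Mr.transpose - Λ' • 1 = (Mr - Λ' • 1).transpose := by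
        rw [Matrix.transpose_sub, Matrix.transpose_smul, Matrix.transpose_one]
      rw [this, Matrix.det_transpose] at hdetT
      exact hdetT
    have hmapm : (M.map (Nat.cast : ℕ → ℂ)) - (Λ' : ℂ) • 1 =
        (Complex.ofRealHom).mapMatrix (Mr - Λ' • 1) := by
      ext i j
      simp only [RingHom.mapMatrix_apply, Matrix.map_apply, Matrix.sub_apply,
        Matrix.smul_apply, Matrix.one_apply, hMr, smul_eq_mul]
      push_cast [apply_ite (Complex.ofRealHom)]
      split <;> simp
    have hdetC : ((M.map (Nat.cast : ℕ → ℂ)) - (Λ' : ℂ) • 1).det = 0 := by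
      rw [hmapm, ← RingHom.map_det]
      rw [hdet]
      simp
    obtain ⟨v, hv0, hv⟩ := Matrix.exists_mulVec_eq_zero_iff.mpr hdetC
    have hvv : (M.map (Nat.cast : ℕ → ℂ)).mulVec v = (Λ' : ℂ) • v := by
      rw [Matrix.sub_mulVec, sub_eq_zero] at hv
      rw [hv, Matrix.smul_mulVec, Matrix.one_mulVec]
    have := hΛdom (Λ' : ℂ) ⟨v, hv0, hvv⟩
    rwa [Complex.norm_real, Real.norm_of_nonneg hΛ'0] at this
  -- |Λ| ≤ Λ'
  have hle2 : |Λ| ≤ Λ' := by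
    obtain ⟨y, hy0, hy⟩ := hΛeig
    set T : ℝ := ∑ p, ρ p * |y p| with hT
    have hTpos : 0 < T := by
      obtain ⟨j₀, hj₀⟩ := Function.ne_iff.mp hy0
      have h1 : 0 < ρ j₀ * |y j₀| := mul_pos (hρpos j₀) (abs_pos.mpr hj₀)
      have h2 : ρ j₀ * |y j₀| ≤ T :=
        Finset.single_le_sum (f := fun p => ρ p * |y p|)
          (fun p _ => mul_nonneg (hρ0 p) (abs_nonneg _)) (Finset.mem_univ j₀)
      linarith
    have hcomp : ∀ j, |Λ| * |y j| ≤ ∑ p, (M j p : ℝ) * |y p| := by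
      intro j
      have h1 : Λ * y j = ∑ p, (M j p : ℝ) * y p := by
        have := congrFun hy j
        rw [Matrix.mulVec, dotProduct] at this
        simp only [Matrix.map_apply, Pi.smul_apply, smul_eq_mul] at this
        exact this.symm
      calc |Λ| * |y j| = |Λ * y j| := (abs_mul Λ (y j)).symm
        _ = |∑ p, (M j p : ℝ) * y p| := by rw [h1]
        _ ≤ ∑ p : Fin k, |(M j p : ℝ) * y p| := Finset.abs_sum_le_sum_abs _ _
        _ = ∑ p, (M j p : ℝ) * |y p| := by
            apply Finset.sum_congr rfl
            intro p _
            rw [abs_mul, abs_of_nonneg (by positivity : (0:ℝ) ≤ (M j p : ℝ))]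
    have hsum : |Λ| * T ≤ Λ' * T := by
      calc |Λ| * T = ∑ j, ρ j * (|Λ| * |y j|) := by
            rw [hT, Finset.mul_sum]
            apply Finset.sum_congr rfl
            intro j _
            ring
        _ ≤ ∑ j, ρ j * ∑ p, (M j p : ℝ) * |y p| :=
            Finset.sum_le_sum (fun j _ => mul_le_mul_of_nonneg_left (hcomp j) (hρ0 j))
        _ = ∑ p, (∑ j, ρ j * (M j p : ℝ)) * |y p| := by
            simp only [Finset.mul_sum, Finset.sum_mul]
            rw [Finset.sum_comm]
            apply Finset.sum_congr rfl
            intro p _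
            apply Finset.sum_congr rfl
            intro j _
            ring
        _ = ∑ p, (Λ' * ρ p) * |y p| := by
            apply Finset.sum_congr rfl
            intro p _
            rw [heigen p]
        _ = Λ' * T := by
            rw [hT, Finset.mul_sum]
            apply Finset.sum_congr rfl
            intro p _
            ring
    exact le_of_mul_le_mul_right hsum hTpos
  have hΛeq : Λ = Λ' := le_antisymm (le_trans (le_abs_self Λ) hle2) hle1
  -- tendsto
  obtain ⟨s, hs0, hstep, hget⟩ := hfix
  have conv' : ∀ ε : ℝ, 0 < ε → ∃ m, ∀ a j, |S12.Fm M m a j - ρ j| ≤ ε := by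
    intro ε hε
    obtain ⟨m, hm⟩ := hconv ε hε
    refine ⟨m, fun a j => ?_⟩
    have := hm 0 a j
    rwa [Nat.zero_add] at this
  refine ⟨ρ, hρne, ?_, ?_⟩
  · intro a
    exact S12.partB hk φ u s hs0 hstep hget hrow ρ hρ0 hρ1 conv' a
  · intro j
    rw [hΛeq]
    exact heigen j
end

section
/- Let M be a nonnegative integer 3×3 matrix with a cubic irrational Perron eigenvalue Λ whose eigenvector equation M t = λ t holds for the vector t = (1−ε, 1−2ε, −ε)^T with ε irrational and λ a conjugate of Λ. Then λ (hence Λ) is at most quadratic over ℚ, a contradiction; formally: if (1−ε, 1−2ε, −ε)^T is an eigenvector of an integer matrix M with eigenvalue λ, then λ is an algebraic number of degree at most 2. -/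
/-- if t = (1−ε, 1−2ε, −ε)ᵀ with ε irrational is an eigenvector of
an integer 3×3 matrix M with eigenvalue λ, then λ is an algebraic number of
degree at most 2 over ℚ. -/
theorem stmt_16 (M : Matrix (Fin 3) (Fin 3) ℤ) (ε lam : ℝ)
    (hirr : Irrational ε)
    (h : (M.map (Int.cast : ℤ → ℝ)).mulVec ![1 - ε, 1 - 2*ε, -ε]
      = lam • ![1 - ε, 1 - 2*ε, -ε]) :
    ∃ p : Polynomial ℚ, p ≠ 0 ∧ p.degree ≤ 2 ∧ Polynomial.aeval lam p = 0 := by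
  have e0 := congrFun h 0
  have e2 := congrFun h 2
  simp [Matrix.mulVec, dotProduct, Fin.sum_univ_three, Matrix.map_apply,
    Matrix.cons_val_zero, Matrix.cons_val_one, Matrix.head_cons, Pi.smul_apply,
    smul_eq_mul] at e0 e2
  set A : ℤ := M 0 0 + M 0 1 - M 2 0 - M 2 1 with hA
  set B : ℤ := -(M 0 0) - 2*M 0 1 - M 0 2 + M 2 0 + 2*M 2 1 + M 2 2 with hB
  set Q : ℤ := -(M 2 0) - 2*M 2 1 - M 2 2 with hQ
  set P : ℤ := M 2 0 + M 2 1 with hP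
  have hd : (Polynomial.X^2 + Polynomial.C ((Q:ℚ) - A) * Polynomial.X
      + Polynomial.C ((B:ℚ)*P - A*Q)).degree = 2 := by
    compute_degree!
  refine ⟨Polynomial.X^2 + Polynomial.C ((Q:ℚ) - A) * Polynomial.X
      + Polynomial.C ((B:ℚ)*P - A*Q), ?_, le_of_eq hd, ?_⟩
  · intro hz
    rw [hz] at hd
    simp at hd
  · have key1 : lam = (A:ℝ) + B * ε := by
      push_cast [hA, hB]
      linear_combination e2 - e0
    have key2 : lam * ε + (Q:ℝ) * ε + P = 0 := by
      push_cast [hQ, hP]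
      linear_combination e2
    simp only [map_add, map_mul, map_pow, Polynomial.aeval_X, Polynomial.aeval_C,
      map_sub, map_intCast]
    push_cast
    linear_combination (lam + (Q:ℝ)) * key1 + (B:ℝ) * key2
end
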